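/- arXiv:1805.09000 — 4 statements merged into one kernel-verified Lean document; each statement's English description precedes it below -/
import Mathlib

section
/- Irreducibility of the ergodic component: Let N ≥ 1 and let k be an integer with N/2 < k ≤ N. Define the jump relation → on {0,1}^{𝕋_N} by: η → η′ if and only if there exists x ∈ 𝕋_N with c_{x,x+1}(η) ≥ 1 and η′ = η^{x,x+1}. Then (i) Ω_N^k is closed under →, i.e. if η ∈ Ω_N^k and η → η′ then η′ ∈ Ω_N^k; and (ii) for any two configurations η, η′ ∈ Ω_N^k, η′ can be reached from η by the reflexive–transitive closure of →. -/
open scoped BigOperators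
open scoped Classical

namespace FEP

/-- A configuration of the facilitated exclusion process on the discrete torus `𝕋_N`. -/
abbrev Config (N : ℕ) := ZMod N → Bool

/-- Real-valued occupation number. -/
noncomputable def ind (b : Bool) : ℝ := if b then 1 else 0

/-- The configuration obtained by exchanging the states of sites `x` and `y`. -/
def swapConf {N : ℕ} (x y : ZMod N) (η : Config N) : Config N :=
  fun z => η (Equiv.swap x y z)

/-- Facilitated exclusion jump rate `c_{x,x+1}(η)`. -/
noncomputable def rate {N : ℕ} (η : Config N) (x : ZMod N) : ℝ :=
  ind (η (x - 1)) * ind (η x) * (1 - ind (η (x + 1))) +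
    ind (η (x + 2)) * ind (η (x + 1)) * (1 - ind (η x))

/-- The generator `𝓛_N` of the facilitated exclusion process, as a matrix. -/
noncomputable def gen (N : ℕ) [NeZero N] : Matrix (Config N) (Config N) ℝ :=
  fun η η' => ∑ x : ZMod N, rate η x *
    ((if η' = swapConf x (x + 1) η then (1 : ℝ) else 0) - (if η' = η then 1 else 0))

/-- The generator as a continuous linear endomorphism of functions on configurations. -/
noncomputable def genE (N : ℕ) [NeZero N] : (Config N → ℝ) →L[ℝ] (Config N → ℝ) :=
  LinearMap.toContinuousLinearMap (Matrix.toLin' (gen N))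

/-- `lawApply N μ t g` is the expectation of `g` at macroscopic time `t` under the diffusively
rescaled dynamics started from the measure `μ`, i.e. `μ(e^{t N² 𝓛_N} g)`. -/
noncomputable def lawApply (N : ℕ) [NeZero N] (μ : Config N → ℝ) (t : ℝ)
    (g : Config N → ℝ) : ℝ :=
  ∑ η : Config N, μ η * (NormedSpace.exp ((t * (N : ℝ) ^ 2) • genE N)) g η

/-- The law at macroscopic time `t` of the diffusively rescaled process started from `μ`. -/
noncomputable def evolveMeasure (N : ℕ) [NeZero N] (μ : Config N → ℝ) (t : ℝ) :
    Config N → ℝ :=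
  fun η' => lawApply N μ t (fun ζ => if ζ = η' then 1 else 0)

/-- Number of particles of a configuration. -/
def numParticles {N : ℕ} [NeZero N] (η : Config N) : ℕ :=
  ∑ x : ZMod N, (if η x then 1 else 0)

/-- The ergodic set `𝓔_N`. -/
def ergodicSet (N : ℕ) [NeZero N] : Set (Config N) :=
  {η | (∀ x : ZMod N, η x = true ∨ η (x + 1) = true) ∧ N < 2 * numParticles η}

/-- The product measure `μ_N` fitting the initial profile `ρ₀`. -/
noncomputable def muN (ρ₀ : ℝ → ℝ) (N : ℕ) [NeZero N] (η : Config N) : ℝ :=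
  ∏ x : ZMod N, (if η x then ρ₀ ((x.val : ℝ) / N) else 1 - ρ₀ ((x.val : ℝ) / N))

end FEP

namespace FEP

/-- The jump relation of the facilitated exclusion process: `η → η'` iff some allowed
nearest-neighbour exchange turns `η` into `η'`. -/
def jumpRel (N : ℕ) [NeZero N] (η η' : Config N) : Prop :=
  ∃ x : ZMod N, 1 ≤ rate η x ∧ η' = swapConf x (x + 1) η

/-- The set `Ω_N^k` of ergodic configurations with `k` particles. -/
def OmegaNk (N k : ℕ) [NeZero N] : Set (Config N) :=
  {η | η ∈ ergodicSet N ∧ numParticles η = k}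

/-!
A jump keeps the number of particles and creates a hole whose two neighbours are occupied, so
holes stay isolated; on configurations with isolated holes every jump can be undone, which makes
reachability inside `Ω_N^k` symmetric. Moving a hole at `x ≠ 0` one step towards `0` (the particle
at `x - 1` jumps to `x`, allowed once `x - 2` is occupied) lowers the sum of the hole positions, so
every configuration reaches one in which no such move is possible. There the holes away from `0`
are closed under `x ↦ x - 2`; since fewer than `N / 2` sites are empty and no two holes are
adjacent, this pins the holes to `0, 2, …, 2 (N - k - 1)`. Every configuration of `Ω_N^k` is
therefore connected to this single one.
-/

open Finset

variable {N : ℕ}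

lemma swapConf_apply (x y z : ZMod N) (η : Config N) :
    swapConf x y η z = if z = x then η y else if z = y then η x else η z := by
  simp only [swapConf, Equiv.swap_apply_def]
  split_ifs <;> rfl

lemma swapConf_swapConf (x y : ZMod N) (η : Config N) : swapConf x y (swapConf x y η) = η := by
  funext z
  simp [swapConf]

lemma one_le_rate_iff (η : Config N) (x : ZMod N) :
    1 ≤ rate η x ↔ η (x - 1) = true ∧ η x = true ∧ η (x + 1) = false ∨
      η (x + 2) = true ∧ η (x + 1) = true ∧ η x = false := by
  unfold rate ind
  cases η (x - 1) <;> cases η x <;> cases η (x + 1) <;> cases η (x + 2) <;> norm_num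

lemma two_ne_zero_of_one_le_rate {η : Config N} {x : ZMod N} (hx : 1 ≤ rate η x) :
    (2 : ZMod N) ≠ 0 := by
  intro h2
  have : x - 1 = x + 1 := by linear_combination -h2
  have : x + 2 = x := by linear_combination h2
  grind [one_le_rate_iff]

lemma one_ne_zero_of_one_le_rate {η : Config N} {x : ZMod N} (hx : 1 ≤ rate η x) :
    (1 : ZMod N) ≠ 0 :=
  fun h1 => two_ne_zero_of_one_le_rate hx (by linear_combination 2 * h1)

def HolesIsolated (η : Config N) : Prop :=
  ∀ x, η x = true ∨ η (x + 1) = true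

lemma HolesIsolated.swapConf_of_one_le_rate {η : Config N} (h : HolesIsolated η) {x : ZMod N}
    (hx : 1 ≤ rate η x) : HolesIsolated (swapConf x (x + 1) η) := by
  have h1 : x + 1 ≠ x := fun e => one_ne_zero_of_one_le_rate hx (by linear_combination e)
  have h2 : x - 1 ≠ x := fun e => one_ne_zero_of_one_le_rate hx (by linear_combination -e)
  intro z
  simp only [swapConf_apply]
  grind [HolesIsolated, one_le_rate_iff]

lemma HolesIsolated.one_le_rate_swapConf {η : Config N} (h : HolesIsolated η) {x : ZMod N}
    (hx : 1 ≤ rate η x) : 1 ≤ rate (swapConf x (x + 1) η) x := by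
  have h1 : x + 1 ≠ x := fun e => one_ne_zero_of_one_le_rate hx (by linear_combination e)
  have h2 : x - 1 ≠ x := fun e => one_ne_zero_of_one_le_rate hx (by linear_combination -e)
  have h3 : x + 2 ≠ x + 1 := fun e => one_ne_zero_of_one_le_rate hx (by linear_combination e)
  have h4 : x + 2 ≠ x := fun e => two_ne_zero_of_one_le_rate hx (by linear_combination e)
  have h5 : x - 1 ≠ x + 1 := fun e => two_ne_zero_of_one_le_rate hx (by linear_combination -e)
  have hl := h (x - 1)
  have hr := h (x + 1)
  rw [sub_add_cancel] at hl
  rw [add_assoc, one_add_one_eq_two] at hr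
  simp only [one_le_rate_iff, swapConf_apply]
  grind [one_le_rate_iff]

/-- With isolated holes, a hole at `x ≠ 0` can be moved to `x - 1` exactly when `x - 2` is
occupied; in a left-stuck configuration no such move is possible. -/
def LeftStuck (η : Config N) : Prop :=
  ∀ x : ZMod N, x ≠ 0 → η x = false → η (x - 2) = false

lemma LeftStuck.eq_false_of_add_two_mul {η : Config N} (hs : LeftStuck η) {w : ℕ} :
    ∀ {j : ℕ}, w + 2 * j < N → η (w + 2 * j : ℕ) = false → η w = false
  | 0, _, h => by simpa using h
  | j + 1, hlt, h => by
    refine eq_false_of_add_two_mul hs (j := j) (by omega) ?_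
    have hne : ((w + 2 * (j + 1) : ℕ) : ZMod N) ≠ 0 := by
      rw [Ne, ← ZMod.val_eq_zero, ZMod.val_cast_of_lt hlt]
      omega
    simpa [mul_add, ← add_assoc] using hs _ hne h

variable [NeZero N]

lemma numParticles_swapConf (x y : ZMod N) (η : Config N) :
    numParticles (swapConf x y η) = numParticles η :=
  Equiv.sum_comp (Equiv.swap x y) fun z => if η z then 1 else 0

lemma HolesIsolated.of_jumpRel {η η' : Config N} (h : HolesIsolated η) (hj : jumpRel N η η') :
    HolesIsolated η' := by
  obtain ⟨x, hx, rfl⟩ := hj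
  exact h.swapConf_of_one_le_rate hx

lemma HolesIsolated.jumpRel_symm {η η' : Config N} (h : HolesIsolated η) (hj : jumpRel N η η') :
    jumpRel N η' η := by
  obtain ⟨x, hx, rfl⟩ := hj
  exact ⟨x, h.one_le_rate_swapConf hx, (swapConf_swapConf x (x + 1) η).symm⟩

lemma HolesIsolated.reflTransGen_symm {η η' : Config N} (h : HolesIsolated η)
    (hr : Relation.ReflTransGen (jumpRel N) η η') : Relation.ReflTransGen (jumpRel N) η' η := by
  induction hr using Relation.ReflTransGen.head_induction_on with
  | refl => exact .refl
  | head hj _ ih => exact (ih (h.of_jumpRel hj)).tail (h.jumpRel_symm hj)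

lemma mem_OmegaNk_of_jumpRel {k : ℕ} {η η' : Config N} (hη : η ∈ OmegaNk N k)
    (hj : jumpRel N η η') : η' ∈ OmegaNk N k := by
  obtain ⟨⟨hiso, hN⟩, hk⟩ := hη
  have hiso' := HolesIsolated.of_jumpRel hiso hj
  obtain ⟨x, -, rfl⟩ := hj
  rw [← numParticles_swapConf x (x + 1)] at hN hk
  exact ⟨⟨hiso', hN⟩, hk⟩

def holeSum (η : Config N) : ℕ :=
  ∑ z, if η z then 0 else z.val

lemma holeSum_swapConf_lt {η : Config N} {x : ZMod N} (hx0 : x ≠ 0) (hx1 : η (x - 1) = true)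
    (hx : η x = false) : holeSum (swapConf (x - 1) x η) < holeSum η := by
  have hval : (x - 1).val < x.val := by
    have hpos : 0 < x.val := ZMod.val_pos.2 hx0
    have : Fact (1 < N) := ⟨by have := x.val_lt; omega⟩
    rw [ZMod.val_sub (by rwa [ZMod.val_one]), ZMod.val_one]
    omega
  unfold holeSum
  rw [← Equiv.sum_comp (Equiv.swap (x - 1) x)]
  refine sum_lt_sum (fun z _ => ?_) ⟨x, mem_univ x, ?_⟩
  · simp only [swapConf, Equiv.swap_apply_self]
    rcases eq_or_ne z (x - 1) with rfl | h1
    · simp [hx1]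
    rcases eq_or_ne z x with rfl | h2
    · simp [hx, hval.le]
    · rw [Equiv.swap_apply_of_ne_of_ne h1 h2]
  · simpa [swapConf, hx] using hval

lemma exists_reflTransGen_leftStuck {k : ℕ} {η : Config N} (hη : η ∈ OmegaNk N k) :
    ∃ ζ, Relation.ReflTransGen (jumpRel N) η ζ ∧ ζ ∈ OmegaNk N k ∧ LeftStuck ζ := by
  induction h : holeSum η using Nat.strong_induction_on generalizing η with
  | _ n ih =>
  by_cases hstuck : LeftStuck η
  · exact ⟨η, .refl, hη, hstuck⟩
  obtain ⟨x, hx0, hx, hx2⟩ : ∃ x, x ≠ 0 ∧ η x = false ∧ η (x - 2) = true := by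
    simpa [LeftStuck] using hstuck
  have hx1 : η (x - 1) = true := by
    simpa [hx] using hη.1.1 (x - 1)
  have hj : jumpRel N η (swapConf (x - 1) x η) := by
    refine ⟨x - 1, (one_le_rate_iff η _).2 (.inl ⟨?_, hx1, ?_⟩), by rw [sub_add_cancel]⟩
    · rwa [sub_sub, one_add_one_eq_two]
    · rwa [sub_add_cancel]
  obtain ⟨ζ, hηζ, hζ⟩ :=
    ih _ (h ▸ holeSum_swapConf_lt hx0 hx1 hx) (mem_OmegaNk_of_jumpRel hη hj) rfl
  exact ⟨ζ, .head hj hηζ, hζ⟩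

def holes (η : Config N) : Finset (ZMod N) :=
  {x | η x = false}

lemma card_holes_add_numParticles (η : Config N) : #(holes η) + numParticles η = N := by
  have hcard := card_filter_add_card_filter_not (s := univ) (fun x => η x = false)
  simp only [card_univ, ZMod.card, Bool.not_eq_false] at hcard
  rwa [numParticles, ← card_filter]

lemma eq_of_holes_eq {η η' : Config N} (h : holes η = holes η') : η = η' := by
  funext z
  have := congrArg (z ∈ ·) h
  simp only [holes, mem_filter, mem_univ, true_and, eq_iff_iff] at this
  cases hz : η z <;> cases hz' : η' z <;> simp_all

lemma le_card_holes {η : Config N} {n : ℕ} (f : ℕ → ℕ) (hf : f.Injective)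
    (hfN : ∀ i < n, f i < N) (hη : ∀ i < n, η (f i) = false) : n ≤ #(holes η) := by
  simpa using card_le_card_of_injOn (s := range n) (t := holes η) (fun i => (f i : ZMod N))
    (fun i hi => by simpa [holes] using hη i (mem_range.1 hi))
    (fun i hi j hj hij => hf <| by
      simpa [ZMod.val_cast_of_lt (hfN i (mem_range.1 hi)),
        ZMod.val_cast_of_lt (hfN j (mem_range.1 hj))] using congrArg ZMod.val hij)

namespace LeftStuck

variable {η : Config N} (hiso : HolesIsolated η) (hs : LeftStuck η)
  (hcard : 2 * #(holes η) < N)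
include hiso hs hcard

/-- If site `1` were empty, the holes `N - 1, N - 3, …` would either fill every odd site
(`N` even: too many holes) or reach the hole `0` next to `1` (`N` odd). -/
lemma one_eq_true : η 1 = true := by
  by_contra h1
  rw [Bool.not_eq_true] at h1
  have hpos : 0 < #(holes η) := card_pos.2 ⟨1, by simpa [holes] using h1⟩
  have hlast : η (N - 1 : ℕ) = false := by
    have hne : (1 : ZMod N) ≠ 0 := by
      have : Fact (1 < N) := ⟨by omega⟩
      exact one_ne_zero
    convert hs 1 hne h1 using 2
    rw [Nat.cast_sub (by omega), ZMod.natCast_self]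
    ring
  rcases Nat.even_or_odd N with ⟨t, ht⟩ | ⟨t, ht⟩
  · have hodd : ∀ i < t, η (2 * i + 1 : ℕ) = false := fun i hi =>
      hs.eq_false_of_add_two_mul (j := t - 1 - i) (by omega) (by convert hlast using 3; omega)
    have := le_card_holes _ (fun a b h => by simpa using h) (fun i hi => by omega) hodd
    omega
  · have h0 : η 0 = false := by
      simpa using hs.eq_false_of_add_two_mul (w := 0) (j := t) (by omega)
        (by convert hlast using 3; omega)
    simpa [h0, h1] using hiso 0

lemma even_val {x : ZMod N} (hx : η x = false) : Even x.val := by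
  by_contra hodd
  obtain ⟨j, hj⟩ := Nat.not_even_iff_odd.1 hodd
  have h1 := hs.eq_false_of_add_two_mul (w := 1) (j := j) (by have := x.val_lt; omega)
    (by rwa [add_comm, ← hj, ZMod.natCast_zmod_val])
  simp [one_eq_true hiso hs hcard] at h1

lemma holes_eq : holes η = (range #(holes η)).image fun i => ((2 * i : ℕ) : ZMod N) := by
  refine eq_of_subset_of_card_le (fun x hx => ?_) (card_image_le.trans (card_range _).le)
  have hx' : η x = false := by simpa [holes] using hx
  obtain ⟨i, hi⟩ := even_val hiso hs hcard hx'
  have hlt : i < #(holes η) := le_card_holes (n := i + 1) (2 * ·)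
    (fun a b h => by simpa using h) (fun j hj => by have := x.val_lt; omega)
    fun j hj => hs.eq_false_of_add_two_mul (j := i - j) (by have := x.val_lt; omega)
      (by rw [show 2 * j + 2 * (i - j) = x.val by omega, ZMod.natCast_zmod_val]; exact hx')
  exact mem_image.2 ⟨i, mem_range.2 hlt, by rw [two_mul, ← hi, ZMod.natCast_zmod_val]⟩

end LeftStuck

lemma LeftStuck.eq_of_mem_OmegaNk {k : ℕ} {ζ ζ' : Config N} (hs : LeftStuck ζ)
    (hs' : LeftStuck ζ') (hζ : ζ ∈ OmegaNk N k) (hζ' : ζ' ∈ OmegaNk N k) : ζ = ζ' := by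
  have h := card_holes_add_numParticles ζ
  have h' := card_holes_add_numParticles ζ'
  obtain ⟨⟨hiso, hN⟩, hk⟩ := hζ
  obtain ⟨⟨hiso', hN'⟩, hk'⟩ := hζ'
  apply eq_of_holes_eq
  rw [holes_eq hiso hs (by omega), holes_eq hiso' hs' (by omega),
    show #(holes ζ) = #(holes ζ') by omega]

theorem ergodic_component_irreducible_general (N k : ℕ) [NeZero N] :
    (∀ η η' : Config N, η ∈ OmegaNk N k → jumpRel N η η' → η' ∈ OmegaNk N k) ∧
      (∀ η η' : Config N, η ∈ OmegaNk N k → η' ∈ OmegaNk N k →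
        Relation.ReflTransGen (jumpRel N) η η') := by
  refine ⟨fun η η' hη hj => mem_OmegaNk_of_jumpRel hη hj, fun η η' hη hη' => ?_⟩
  obtain ⟨ζ, hηζ, hζ, hζs⟩ := exists_reflTransGen_leftStuck hη
  obtain ⟨ζ', hη'ζ', hζ', hζs'⟩ := exists_reflTransGen_leftStuck hη'
  obtain rfl : ζ = ζ' := hζs.eq_of_mem_OmegaNk hζs' hζ hζ'
  exact hηζ.trans (HolesIsolated.reflTransGen_symm hη'.1.1 hη'ζ')

/-- **Irreducibility of the ergodic component.**  For `N/2 < k ≤ N`, the set `Ω_N^k` is closed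
under the jump relation, and any two of its configurations are connected by a chain of jumps. -/
theorem ergodic_component_irreducible (N k : ℕ) [NeZero N] (hk : N < 2 * k) (hkN : k ≤ N) :
    (∀ η η' : Config N, η ∈ OmegaNk N k → jumpRel N η η' → η' ∈ OmegaNk N k) ∧
      (∀ η η' : Config N, η ∈ OmegaNk N k → η' ∈ OmegaNk N k →
        Relation.ReflTransGen (jumpRel N) η η') :=
  ergodic_component_irreducible_general N k

end FEP
end

section
/- Empirical measure at the transience time: Set t_N = (log N)^{32}/N². For every smooth φ : 𝕋 → ℝ and every sequence (ν_N)_N of probability measures on {0,1}^{𝕋_N}, one has lim_{N→∞} Σ_η ν_N(η)·(e^{t_N N²𝓛_N} G_η)(η) = 0, where for each fixed configuration η, G_η is the function defined on configurations by G_η(η′) = |(1/N) Σ_{x∈𝕋_N} φ(x/N)(η′(x) − η(x))|. -/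
open scoped BigOperators
open scoped Classical
set_option synthInstance.maxHeartbeats 1000000
set_option maxHeartbeats 1000000

namespace FEP

section Aux
variable {N : ℕ} [NeZero N]
set_option linter.unusedSectionVars false

lemma ind_nonneg (b : Bool) : 0 ≤ ind b := by unfold ind; split <;> norm_num

lemma ind_le_one (b : Bool) : ind b ≤ 1 := by unfold ind; split <;> norm_num

lemma rate_nonneg (η : Config N) (x : ZMod N) : 0 ≤ rate η x := by
  unfold rate ind; split_ifs <;> norm_num

lemma rate_le_two (η : Config N) (x : ZMod N) : rate η x ≤ 2 := by
  unfold rate ind; split_ifs <;> norm_num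

lemma genE_apply (f : Config N → ℝ) (η : Config N) :
    genE N f η = ∑ x : ZMod N, rate η x * (f (swapConf x (x + 1) η) - f η) := by
  have h0 : genE N f η = ∑ ζ : Config N, gen N η ζ * f ζ := by
    simp [genE, Matrix.toLin'_apply, Matrix.mulVec, dotProduct]
  rw [h0]
  unfold gen
  simp only [Finset.sum_mul]
  rw [Finset.sum_comm]
  refine Finset.sum_congr rfl fun x _ => ?_
  simp only [mul_assoc, ← Finset.mul_sum]
  congr 1
  rw [Finset.sum_congr rfl (fun ζ _ => sub_mul _ _ _), Finset.sum_sub_distrib]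
  simp [Finset.sum_ite_eq', ite_mul]

lemma sum_rate_le (ζ : Config N) : ∑ x : ZMod N, rate ζ x ≤ 2 * N := by
  calc ∑ x : ZMod N, rate ζ x ≤ ∑ _x : ZMod N, (2:ℝ) :=
        Finset.sum_le_sum fun x _ => rate_le_two ζ x
    _ = 2 * N := by simp [ZMod.card, mul_comm]

lemma genE_add_nonneg (f : Config N → ℝ) (hf : ∀ ζ, 0 ≤ f ζ) (ζ : Config N) :
    0 ≤ genE N f ζ + (2 * N) * f ζ := by
  rw [genE_apply]
  have h1 : ∀ x : ZMod N, rate ζ x * f ζ - rate ζ x * f ζ + 0 ≤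
      rate ζ x * (f (swapConf x (x + 1) ζ) - f ζ) + rate ζ x * f ζ := by
    intro x
    have := mul_nonneg (rate_nonneg ζ x) (hf (swapConf x (x + 1) ζ))
    nlinarith
  have h2 : 0 ≤ ∑ x : ZMod N, (rate ζ x * (f (swapConf x (x + 1) ζ) - f ζ) + rate ζ x * f ζ) := by
    refine Finset.sum_nonneg fun x _ => ?_
    have := h1 x; linarith
  rw [Finset.sum_add_distrib, ← Finset.sum_mul] at h2
  have h3 : (∑ x : ZMod N, rate ζ x) * f ζ ≤ (2 * N) * f ζ :=
    mul_le_mul_of_nonneg_right (sum_rate_le ζ) (hf ζ)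
  linarith

lemma exp_apply_nonneg {c : ℝ} (hc : 0 ≤ c) (f : Config N → ℝ) (hf : ∀ ζ, 0 ≤ f ζ)
    (η : Config N) : 0 ≤ NormedSpace.exp (c • genE N) f η := by
  set lam : ℝ := c * (2 * N) with hlam
  set B : (Config N → ℝ) →L[ℝ] (Config N → ℝ) := c • genE N + lam • 1 with hB
  have hBpos : ∀ g : Config N → ℝ, (∀ ζ, 0 ≤ g ζ) → ∀ ζ, 0 ≤ B g ζ := by
    intro g hg ζ
    have h := genE_add_nonneg g hg ζ
    have he : B g ζ = c * (genE N g ζ + (2 * N) * g ζ) := by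
      simp [hB, hlam, ContinuousLinearMap.add_apply, ContinuousLinearMap.smul_apply,
        ContinuousLinearMap.one_apply, Pi.add_apply, Pi.smul_apply, smul_eq_mul]
      ring
    rw [he]; exact mul_nonneg hc h
  have hBn : ∀ n : ℕ, ∀ ζ, 0 ≤ (B ^ n) f ζ := by
    intro n
    induction n with
    | zero => simpa using hf
    | succ n ih =>
      intro ζ
      have he : (B ^ (n + 1)) f ζ = B ((B ^ n) f) ζ := by
        rw [pow_succ']; simp [ContinuousLinearMap.mul_apply]
      rw [he]
      exact hBpos _ ih ζ
  have hsum : Summable (fun n : ℕ => ((n.factorial : ℝ))⁻¹ • B ^ n) :=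
    NormedSpace.expSeries_summable' B
  have hexpB : ∀ ζ, 0 ≤ NormedSpace.exp B f ζ := by
    intro ζ
    set T : ((Config N → ℝ) →L[ℝ] (Config N → ℝ)) →L[ℝ] ℝ :=
      (ContinuousLinearMap.proj ζ).comp (ContinuousLinearMap.apply ℝ (Config N → ℝ) f) with hT
    have h1 : NormedSpace.exp B f ζ = ∑' n : ℕ, ((n.factorial : ℝ))⁻¹ * ((B ^ n) f ζ) := by
      have h2 : NormedSpace.exp B f ζ = T (NormedSpace.exp B) := rfl
      rw [h2, NormedSpace.exp_eq_tsum ℝ, T.map_tsum hsum]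
      refine tsum_congr fun n => ?_
      simp [hT, ContinuousLinearMap.comp_apply, ContinuousLinearMap.apply_apply,
        ContinuousLinearMap.proj_apply, ContinuousLinearMap.smul_apply, Pi.smul_apply,
        smul_eq_mul]
    rw [h1]
    exact tsum_nonneg fun n => mul_nonneg (by positivity) (hBn n ζ)
  have hcomm : Commute B ((-lam) • (1 : (Config N → ℝ) →L[ℝ] (Config N → ℝ))) :=
    (Commute.one_right B).smul_right _
  have hsplit : c • genE N = B + (-lam) • (1 : (Config N → ℝ) →L[ℝ] (Config N → ℝ)) := by
    have hz : lam • (1 : (Config N → ℝ) →L[ℝ] (Config N → ℝ)) + (-lam) • 1 = 0 := by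
      rw [← add_smul]; simp
    rw [hB, add_assoc, hz, add_zero]
  have hexps : NormedSpace.exp ((-lam) • (1 : (Config N → ℝ) →L[ℝ] (Config N → ℝ)))
      = Real.exp (-lam) • (1 : (Config N → ℝ) →L[ℝ] (Config N → ℝ)) := by
    have h1 : ((-lam) • (1 : (Config N → ℝ) →L[ℝ] (Config N → ℝ)))
        = algebraMap ℝ ((Config N → ℝ) →L[ℝ] (Config N → ℝ)) (-lam) :=
      (Algebra.algebraMap_eq_smul_one _).symm
    rw [h1, ← NormedSpace.algebraMap_exp_comm, Real.exp_eq_exp_ℝ,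
      Algebra.algebraMap_eq_smul_one]
  have hfin : NormedSpace.exp (c • genE N) f η
      = Real.exp (-lam) * NormedSpace.exp B f η := by
    rw [hsplit, NormedSpace.exp_add_of_commute_of_mem_ball (𝕂 := ℝ) hcomm
      (by simp [NormedSpace.expSeries_radius_eq_top]) (by simp [NormedSpace.expSeries_radius_eq_top]), hexps]
    simp [ContinuousLinearMap.mul_apply, ContinuousLinearMap.smul_apply,
      ContinuousLinearMap.one_apply, Pi.smul_apply, smul_eq_mul, map_smul]
  rw [hfin]
  exact mul_nonneg (Real.exp_nonneg _) (hexpB η)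

lemma exp_apply_one (c : ℝ) (η : Config N) :
    NormedSpace.exp (c • genE N) (fun _ => (1 : ℝ)) η = 1 := by
  set B : (Config N → ℝ) →L[ℝ] (Config N → ℝ) := c • genE N with hB
  have h0 : B (fun _ => (1 : ℝ)) = 0 := by
    ext ζ
    have : genE N (fun _ => (1 : ℝ)) ζ = 0 := by
      rw [genE_apply]; simp
    simp [hB, ContinuousLinearMap.smul_apply, Pi.smul_apply, smul_eq_mul, this]
  have hsum : Summable (fun n : ℕ => ((n.factorial : ℝ))⁻¹ • B ^ n) :=
    NormedSpace.expSeries_summable' B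
  set T : ((Config N → ℝ) →L[ℝ] (Config N → ℝ)) →L[ℝ] ℝ :=
    (ContinuousLinearMap.proj η).comp
      (ContinuousLinearMap.apply ℝ (Config N → ℝ) (fun _ => (1 : ℝ))) with hT
  have h1 : NormedSpace.exp B (fun _ => (1 : ℝ)) η
      = ∑' n : ℕ, ((n.factorial : ℝ))⁻¹ * ((B ^ n) (fun _ => (1 : ℝ)) η) := by
    have h2 : NormedSpace.exp B (fun _ => (1 : ℝ)) η = T (NormedSpace.exp B) := rfl
    rw [h2, NormedSpace.exp_eq_tsum ℝ, T.map_tsum hsum]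
    refine tsum_congr fun n => ?_
    simp [hT, ContinuousLinearMap.comp_apply, ContinuousLinearMap.apply_apply,
      ContinuousLinearMap.proj_apply, ContinuousLinearMap.smul_apply, Pi.smul_apply,
      smul_eq_mul]
  rw [h1]
  rw [tsum_eq_single 0 ?_]
  · simp
  · intro n hn
    obtain ⟨m, rfl⟩ := Nat.exists_eq_succ_of_ne_zero hn
    have : (B ^ (m + 1)) (fun _ => (1 : ℝ)) = 0 := by
      rw [pow_succ]
      simp [ContinuousLinearMap.mul_apply, h0]
    rw [this]
    simp

lemma abs_exp_apply_le {c : ℝ} (hc : 0 ≤ c) (f : Config N → ℝ) (η : Config N)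
    {K : ℝ} (hK : ∀ ζ, |f ζ| ≤ K) :
    |NormedSpace.exp (c • genE N) f η| ≤ K := by
  set P := NormedSpace.exp (c • genE N) with hP
  have hup : 0 ≤ P ((fun _ => K) - f) η :=
    exp_apply_nonneg hc _ (fun ζ => by have := abs_le.mp (hK ζ); simpa using this.2) η
  have hlo : 0 ≤ P ((fun _ => K) + f) η :=
    exp_apply_nonneg hc _ (fun ζ => by have := abs_le.mp (hK ζ); simpa using by linarith [this.1]) η
  have hKone : ((fun _ => K) : Config N → ℝ) = K • (fun _ => (1 : ℝ)) := by
    ext ζ; simp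
  have h1 : P ((fun _ => K) - f) η = K - P f η := by
    rw [map_sub, hKone, map_smul]
    simp [Pi.sub_apply, Pi.smul_apply, smul_eq_mul, exp_apply_one (N := N) c η, hP]
  have h2 : P ((fun _ => K) + f) η = K + P f η := by
    rw [map_add, hKone, map_smul]
    simp [Pi.add_apply, Pi.smul_apply, smul_eq_mul, exp_apply_one (N := N) c η, hP]
  rw [h1] at hup; rw [h2] at hlo
  rw [abs_le]; constructor <;> linarith

lemma exp_abs_sq_le {c : ℝ} (hc : 0 ≤ c) (f : Config N → ℝ) (η : Config N) :
    (NormedSpace.exp (c • genE N) (fun ζ => |f ζ|) η) ^ 2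
      ≤ NormedSpace.exp (c • genE N) (fun ζ => (f ζ) ^ 2) η := by
  set P := NormedSpace.exp (c • genE N) with hP
  set r : ℝ := P (fun ζ => |f ζ|) η with hr
  have h1 : 0 ≤ P (fun ζ => (|f ζ| - r) ^ 2) η :=
    exp_apply_nonneg hc _ (fun ζ => sq_nonneg _) η
  have h2 : (fun ζ => (|f ζ| - r) ^ 2)
      = (fun ζ => (f ζ) ^ 2) - (2 * r) • (fun ζ => |f ζ|) + (r ^ 2) • (fun _ => (1 : ℝ)) := by
    ext ζ
    simp only [Pi.add_apply, Pi.sub_apply, Pi.smul_apply, smul_eq_mul]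
    rw [sub_sq, sq_abs]
    ring
  rw [h2, map_add, map_sub, map_smul, map_smul] at h1
  simp only [Pi.add_apply, Pi.sub_apply, Pi.smul_apply, smul_eq_mul] at h1
  rw [exp_apply_one (N := N) c η] at h1
  rw [← hr] at h1
  nlinarith [h1]

lemma exp_apply_sub_le {s : ℝ} (hs : 0 ≤ s) (h : Config N → ℝ) (η : Config N)
    {C : ℝ} (hC : ∀ ζ, |genE N h ζ| ≤ C) :
    |NormedSpace.exp (s • genE N) h η - h η| ≤ s * C := by
  set A : (Config N → ℝ) →L[ℝ] (Config N → ℝ) := s • genE N with hA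
  set T : ((Config N → ℝ) →L[ℝ] (Config N → ℝ)) →L[ℝ] ℝ :=
    (ContinuousLinearMap.proj η).comp (ContinuousLinearMap.apply ℝ (Config N → ℝ) h) with hT
  set F : ℝ → ℝ := fun u => NormedSpace.exp (u • A) h η with hF
  set F' : ℝ → ℝ := fun u => (NormedSpace.exp (u • A) * A) h η with hF'
  have hder : ∀ t : ℝ, HasDerivAt F (F' t) t := by
    intro t
    have hd := hasDerivAt_exp_smul_const (𝕂 := ℝ) A t
    have := (T.hasFDerivAt (x := NormedSpace.exp (t • A))).comp_hasDerivAt t hd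
    exact this
  have hbound : ∀ t ∈ Set.Icc (0 : ℝ) 1, ‖F' t‖ ≤ s * C := by
    intro t ht
    have h1 : F' t = NormedSpace.exp ((t * s) • genE N) (A h) η := by
      simp only [hF', ContinuousLinearMap.mul_apply, hA, smul_smul]
    rw [Real.norm_eq_abs, h1]
    have hAh : ∀ ζ, |A h ζ| ≤ s * C := by
      intro ζ
      have : A h ζ = s * genE N h ζ := by
        simp [hA, ContinuousLinearMap.smul_apply, Pi.smul_apply, smul_eq_mul]
      rw [this, abs_mul, abs_of_nonneg hs]
      exact mul_le_mul_of_nonneg_left (hC ζ) hs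
    exact abs_exp_apply_le (mul_nonneg ht.1 hs) (A h) η hAh
  have hmv := Convex.norm_image_sub_le_of_norm_hasDerivWithin_le
    (f := F) (f' := F') (C := s * C) (s := Set.Icc (0 : ℝ) 1)
    (fun t ht => (hder t).hasDerivWithinAt) hbound (convex_Icc 0 1)
    (Set.left_mem_Icc.mpr zero_le_one) (Set.right_mem_Icc.mpr zero_le_one)
  have hF0 : F 0 = h η := by
    simp [hF, NormedSpace.exp_zero, ContinuousLinearMap.one_apply]
  have hF1 : F 1 = NormedSpace.exp (s • genE N) h η := by
    simp [hF, hA]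
  rw [hF0, hF1, Real.norm_eq_abs] at hmv
  simpa using hmv

lemma ind_sub_abs (a b : Bool) : |ind a - ind b| ≤ 1 := by
  unfold ind; split_ifs <;> norm_num

lemma phi_step (φ : ℝ → ℝ) (hper : ∀ u, φ (u + 1) = φ u)
    {L : ℝ} (hL : ∀ a b : ℝ, |φ a - φ b| ≤ L * |a - b|) (x : ZMod N) :
    |φ ((((x + 1 : ZMod N)).val : ℝ) / N) - φ ((x.val : ℝ) / N)| ≤ L / N := by
  have hN : 0 < N := Nat.pos_of_ne_zero (NeZero.ne N)
  have hNR : (0 : ℝ) < N := by exact_mod_cast hN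
  have hL0 : 0 ≤ L := le_trans (abs_nonneg _) (by simpa using hL 1 0)
  by_cases hN1 : N = 1
  · subst hN1
    have h1 : x.val = 0 := Nat.lt_one_iff.mp (ZMod.val_lt x)
    have h2 : ((x + 1 : ZMod 1)).val = 0 := Nat.lt_one_iff.mp (ZMod.val_lt _)
    rw [h1, h2]
    simp
    positivity
  · have hN2 : 2 ≤ N := by omega
    have hone : (1 : ZMod N).val = 1 := by
      rw [ZMod.val_one_eq_one_mod]; exact Nat.mod_eq_of_lt (by omega)
    have hvx : x.val < N := ZMod.val_lt x
    rcases Nat.lt_or_ge (x.val + 1) N with hlt | hge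
    · have hv : ((x + 1 : ZMod N)).val = x.val + 1 := by
        rw [ZMod.val_add_of_lt]
        · rw [hone]
        · rw [hone]; exact hlt
      rw [hv]
      have hd : (((x.val + 1 : ℕ) : ℝ) / N) - ((x.val : ℝ) / N) = 1 / N := by
        push_cast; field_simp; ring
      calc |φ (((x.val + 1 : ℕ) : ℝ) / N) - φ ((x.val : ℝ) / N)|
          ≤ L * |(((x.val + 1 : ℕ) : ℝ) / N) - ((x.val : ℝ) / N)| := hL _ _
        _ = L / N := by rw [hd, abs_of_pos (by positivity)]; ring
    · have hvN : x.val + 1 = N := by omega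
      have hv : ((x + 1 : ZMod N)).val = 0 := by
        rw [ZMod.val_add, hone, hvN, Nat.mod_self]
      rw [hv]
      have hxr : (x.val : ℝ) = (N : ℝ) - 1 := by
        have : ((x.val + 1 : ℕ) : ℝ) = (N : ℝ) := by exact_mod_cast congrArg (Nat.cast (R := ℝ)) hvN
        push_cast at this; linarith
      have hphi0 : φ (((0 : ℕ) : ℝ) / N) = φ 1 := by
        have h10 : φ 1 = φ 0 := by simpa using hper 0
        rw [h10]; norm_num
      rw [hphi0]
      calc |φ 1 - φ ((x.val : ℝ) / N)| ≤ L * |1 - (x.val : ℝ) / N| := hL _ _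
        _ = L / N := by
            rw [hxr]
            have : 1 - ((N : ℝ) - 1) / N = 1 / N := by field_simp; ring
            rw [this, abs_of_pos (by positivity)]; ring

/-- The empirical field. -/
noncomputable def gN (φ : ℝ → ℝ) (N : ℕ) [NeZero N] (ζ : Config N) : ℝ :=
  (1 / (N : ℝ)) * ∑ x : ZMod N, φ ((x.val : ℝ) / N) * ind (ζ x)

lemma gN_abs_le (φ : ℝ → ℝ) {K : ℝ} (hK : ∀ u ∈ Set.Icc (0 : ℝ) 1, |φ u| ≤ K)
    (ζ : Config N) : |gN φ N ζ| ≤ K := by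
  have hN : 0 < N := Nat.pos_of_ne_zero (NeZero.ne N)
  have hNR : (0 : ℝ) < N := by exact_mod_cast hN
  have hK0 : 0 ≤ K := le_trans (abs_nonneg _) (hK 0 ⟨le_rfl, zero_le_one⟩)
  have hterm : ∀ x : ZMod N, |φ ((x.val : ℝ) / N) * ind (ζ x)| ≤ K := by
    intro x
    have hmem : (x.val : ℝ) / N ∈ Set.Icc (0 : ℝ) 1 := by
      constructor
      · positivity
      · rw [div_le_one hNR]; exact_mod_cast (ZMod.val_lt x).le
    rw [abs_mul]
    calc |φ ((x.val : ℝ) / N)| * |ind (ζ x)| ≤ K * 1 := by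
          apply mul_le_mul (hK _ hmem) _ (abs_nonneg _) hK0
          rw [abs_of_nonneg (ind_nonneg _)]; exact ind_le_one _
      _ = K := mul_one K
  rw [gN, abs_mul]
  calc |1 / (N : ℝ)| * |∑ x : ZMod N, φ ((x.val : ℝ) / N) * ind (ζ x)|
      ≤ (1 / (N : ℝ)) * ((N : ℝ) * K) := by
        apply mul_le_mul
        · rw [abs_of_pos (by positivity)]
        · calc |∑ x : ZMod N, φ ((x.val : ℝ) / N) * ind (ζ x)|
              ≤ ∑ x : ZMod N, |φ ((x.val : ℝ) / N) * ind (ζ x)| :=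
                Finset.abs_sum_le_sum_abs _ _
            _ ≤ ∑ _x : ZMod N, K := Finset.sum_le_sum fun x _ => hterm x
            _ = (N : ℝ) * K := by simp [ZMod.card, mul_comm]
        · exact abs_nonneg _
        · positivity
    _ = K := by field_simp
  -- done

lemma gN_swap_le (φ : ℝ → ℝ) (hper : ∀ u, φ (u + 1) = φ u)
    {L : ℝ} (hL : ∀ a b : ℝ, |φ a - φ b| ≤ L * |a - b|)
    (ζ : Config N) (x : ZMod N) :
    |gN φ N (swapConf x (x + 1) ζ) - gN φ N ζ| ≤ L / (N : ℝ) ^ 2 := by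
  have hN : 0 < N := Nat.pos_of_ne_zero (NeZero.ne N)
  have hNR : (0 : ℝ) < N := by exact_mod_cast hN
  have hL0 : 0 ≤ L := le_trans (abs_nonneg _) (by simpa using hL 1 0)
  set S : ℝ := ∑ x' : ZMod N,
    φ ((x'.val : ℝ) / N) * (ind (swapConf x (x + 1) ζ x') - ind (ζ x')) with hS
  have hdiff : gN φ N (swapConf x (x + 1) ζ) - gN φ N ζ = (1 / (N : ℝ)) * S := by
    rw [gN, gN, ← mul_sub, ← Finset.sum_sub_distrib]
    congr 1
    exact Finset.sum_congr rfl fun x' _ => by rw [← mul_sub]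
  have hSle : |S| ≤ L / N := by
    by_cases hx : (x + 1 : ZMod N) = x
    · have : S = 0 := by
        rw [hS]
        refine Finset.sum_eq_zero fun x' _ => ?_
        simp [swapConf, hx, Equiv.swap_self]
      rw [this, abs_zero]; positivity
    · have hxx : x ≠ x + 1 := fun h => hx h.symm
      have hsub : S = ∑ y ∈ ({x, x + 1} : Finset (ZMod N)),
          φ ((y.val : ℝ) / N) * (ind (swapConf x (x + 1) ζ y) - ind (ζ y)) := by
        rw [hS]
        refine (Finset.sum_subset (Finset.subset_univ _) fun y _ hy => ?_).symm
        simp only [Finset.mem_insert, Finset.mem_singleton, not_or] at hy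
        have : swapConf x (x + 1) ζ y = ζ y := by
          simp [swapConf, Equiv.swap_apply_of_ne_of_ne hy.1 hy.2]
        rw [this]; simp
      rw [hsub, Finset.sum_pair hxx]
      have e1 : swapConf x (x + 1) ζ x = ζ (x + 1) := by
        simp [swapConf, Equiv.swap_apply_left]
      have e2 : swapConf x (x + 1) ζ (x + 1) = ζ x := by
        simp [swapConf, Equiv.swap_apply_right]
      rw [e1, e2]
      have e3 : φ ((x.val : ℝ) / N) * (ind (ζ (x + 1)) - ind (ζ x)) +
          φ ((((x + 1 : ZMod N)).val : ℝ) / N) * (ind (ζ x) - ind (ζ (x + 1)))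
          = (φ ((((x + 1 : ZMod N)).val : ℝ) / N) - φ ((x.val : ℝ) / N)) *
            (ind (ζ x) - ind (ζ (x + 1))) := by ring
      rw [e3, abs_mul]
      calc |φ ((((x + 1 : ZMod N)).val : ℝ) / N) - φ ((x.val : ℝ) / N)| *
            |ind (ζ x) - ind (ζ (x + 1))| ≤ (L / N) * 1 := by
            apply mul_le_mul (phi_step φ hper hL x) (ind_sub_abs _ _) (abs_nonneg _)
            positivity
        _ = L / N := mul_one _
  rw [hdiff, abs_mul, abs_of_pos (show (0:ℝ) < 1 / (N:ℝ) by positivity)]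
  calc (1 / (N : ℝ)) * |S| ≤ (1 / (N : ℝ)) * (L / N) :=
        mul_le_mul_of_nonneg_left hSle (by positivity)
    _ = L / (N : ℝ) ^ 2 := by ring

lemma key_estimate (φ : ℝ → ℝ) (hper : ∀ u, φ (u + 1) = φ u)
    {K L : ℝ} (hK : ∀ u ∈ Set.Icc (0 : ℝ) 1, |φ u| ≤ K)
    (hL : ∀ a b : ℝ, |φ a - φ b| ≤ L * |a - b|)
    {s : ℝ} (hs : 0 ≤ s) (η : Config N) :
    0 ≤ NormedSpace.exp (s • genE N) (fun ζ => |gN φ N ζ - gN φ N η|) η ∧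
    NormedSpace.exp (s • genE N) (fun ζ => |gN φ N ζ - gN φ N η|) η
      ≤ Real.sqrt (s * (8 * K * L / N)) := by
  have hN : 0 < N := Nat.pos_of_ne_zero (NeZero.ne N)
  have hNR : (0 : ℝ) < N := by exact_mod_cast hN
  have hK0 : 0 ≤ K := le_trans (abs_nonneg _) (hK 0 ⟨le_rfl, zero_le_one⟩)
  have hL0 : 0 ≤ L := le_trans (abs_nonneg _) (by simpa using hL 1 0)
  have habs2 : ∀ a b : ℝ, |a| ≤ K → |b| ≤ K → |a - b| ≤ 2 * K := by
    intro a b ha hb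
    have h1 := abs_le.mp ha; have h2 := abs_le.mp hb
    rw [abs_le]; constructor <;> linarith
  set q : Config N → ℝ := fun ζ => (gN φ N ζ - gN φ N η) ^ 2 with hqdef
  have hterm : ∀ ζ : Config N, ∀ x : ZMod N,
      |rate ζ x * (q (swapConf x (x + 1) ζ) - q ζ)| ≤ 2 * (L / (N : ℝ) ^ 2 * (4 * K)) := by
    intro ζ x
    rw [abs_mul, abs_of_nonneg (rate_nonneg _ _)]
    have hΔ : q (swapConf x (x + 1) ζ) - q ζ
        = (gN φ N (swapConf x (x + 1) ζ) - gN φ N ζ) *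
          ((gN φ N (swapConf x (x + 1) ζ) - gN φ N η) + (gN φ N ζ - gN φ N η)) := by
      simp only [hqdef]; ring
    rw [hΔ, abs_mul]
    refine mul_le_mul (rate_le_two _ _) ?_ (by positivity) (by norm_num)
    refine mul_le_mul (gN_swap_le φ hper hL ζ x) ?_ (abs_nonneg _) (by positivity)
    calc |(gN φ N (swapConf x (x + 1) ζ) - gN φ N η) + (gN φ N ζ - gN φ N η)|
        ≤ |gN φ N (swapConf x (x + 1) ζ) - gN φ N η| + |gN φ N ζ - gN φ N η| := abs_add_le _ _
      _ ≤ 2 * K + 2 * K := add_le_add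
          (habs2 _ _ (gN_abs_le φ hK _) (gN_abs_le φ hK _))
          (habs2 _ _ (gN_abs_le φ hK _) (gN_abs_le φ hK _))
      _ = 4 * K := by ring
  have hq : ∀ ζ, |genE N q ζ| ≤ 8 * K * L / N := by
    intro ζ
    rw [genE_apply]
    calc |∑ x : ZMod N, rate ζ x * (q (swapConf x (x + 1) ζ) - q ζ)|
        ≤ ∑ x : ZMod N, |rate ζ x * (q (swapConf x (x + 1) ζ) - q ζ)| :=
          Finset.abs_sum_le_sum_abs _ _
      _ ≤ ∑ _x : ZMod N, 2 * (L / (N : ℝ) ^ 2 * (4 * K)) :=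
          Finset.sum_le_sum fun x _ => hterm ζ x
      _ = (N : ℝ) * (2 * (L / (N : ℝ) ^ 2 * (4 * K))) := by
          simp [ZMod.card, mul_comm]
      _ = 8 * K * L / N := by field_simp; ring
  have h0 : 0 ≤ NormedSpace.exp (s • genE N) (fun ζ => |gN φ N ζ - gN φ N η|) η :=
    exp_apply_nonneg hs _ (fun ζ => abs_nonneg _) η
  refine ⟨h0, ?_⟩
  have hCS := exp_abs_sq_le hs (fun ζ => gN φ N ζ - gN φ N η) η
  have hMV := exp_apply_sub_le hs q η hq
  have hq0 : q η = 0 := by simp [hqdef]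
  rw [hq0, sub_zero] at hMV
  have hPq : NormedSpace.exp (s • genE N) q η ≤ s * (8 * K * L / N) :=
    (le_abs_self _).trans hMV
  have hsq : (NormedSpace.exp (s • genE N) (fun ζ => |gN φ N ζ - gN φ N η|) η) ^ 2
      ≤ s * (8 * K * L / N) := le_trans hCS hPq
  calc NormedSpace.exp (s • genE N) (fun ζ => |gN φ N ζ - gN φ N η|) η
      = Real.sqrt ((NormedSpace.exp (s • genE N) (fun ζ => |gN φ N ζ - gN φ N η|) η) ^ 2) :=
        (Real.sqrt_sq h0).symm
    _ ≤ Real.sqrt (s * (8 * K * L / N)) := Real.sqrt_le_sqrt hsq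

end Aux

/-- **Empirical measure at the transience time.**  With `t_N = (log N)^{32}/N²`, for every
smooth periodic `φ` and every sequence of probability measures `ν_N`, the expected deviation
of the empirical field of `φ` between times `0` and `t_N` vanishes as `N → ∞`. -/
theorem empirical_measure_transience
    (φ : ℝ → ℝ) (hφ : ContDiff ℝ (⊤ : ℕ∞) φ) (hper : ∀ u, φ (u + 1) = φ u)
    (ν : ∀ N : ℕ, Config N → ℝ)
    (hν0 : ∀ N η, 0 ≤ ν N η)
    (hν1 : ∀ (N : ℕ) [NeZero N], ∑ η : Config N, ν N η = 1) :
    Filter.Tendsto (fun N : ℕ =>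
      if h : N = 0 then 0 else
        haveI : NeZero N := ⟨h⟩
        ∑ η : Config N, ν N η *
          (NormedSpace.exp
              ((((Real.log N) ^ (32 : ℕ) / (N : ℝ) ^ 2) * (N : ℝ) ^ 2) • genE N))
            (fun η' => |(1 / (N : ℝ)) *
                ∑ x : ZMod N, φ ((x.val : ℝ) / N) * (ind (η' x) - ind (η x))|) η)
      Filter.atTop (nhds 0) := by
  -- bound for φ
  obtain ⟨K, hK'⟩ := (isCompact_Icc (a := (0:ℝ)) (b := 1)).exists_bound_of_continuousOn
    hφ.continuous.continuousOn
  have hK : ∀ u ∈ Set.Icc (0 : ℝ) 1, |φ u| ≤ K := by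
    intro u hu; simpa [Real.norm_eq_abs] using hK' u hu
  -- Lipschitz bound for φ
  have hdiff : Differentiable ℝ φ := hφ.differentiable (by simp)
  have hdc : Continuous (deriv φ) := hφ.continuous_deriv (by simp)
  obtain ⟨M, hM'⟩ := (isCompact_Icc (a := (0:ℝ)) (b := 1)).exists_bound_of_continuousOn
    hdc.continuousOn
  have hperD : ∀ u : ℝ, deriv φ (u + 1) = deriv φ u := by
    intro u
    have h1 : HasDerivAt (fun v : ℝ => φ (v + 1)) (deriv φ (u + 1)) u := by
      have h2 := ((hdiff (u + 1)).hasDerivAt).comp u ((hasDerivAt_id u).add_const 1)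
      rw [mul_one] at h2; exact h2
    have h3 : (fun v : ℝ => φ (v + 1)) = φ := funext hper
    rw [h3] at h1
    exact h1.deriv.symm
  have hMall : ∀ u : ℝ, ‖deriv φ u‖ ≤ M := by
    intro u
    have hp : Function.Periodic (deriv φ) 1 := hperD
    have h1 : deriv φ (u - (⌊u⌋ : ℤ) * 1) = deriv φ u := hp.sub_int_mul_eq ⌊u⌋
    have h2 : u - ((⌊u⌋ : ℤ) : ℝ) * 1 = Int.fract u := by rw [Int.fract]; ring
    rw [h2] at h1
    rw [← h1]
    exact hM' _ ⟨Int.fract_nonneg u, (Int.fract_lt_one u).le⟩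
  have hL : ∀ a b : ℝ, |φ a - φ b| ≤ M * |a - b| := by
    intro a b
    have := Convex.norm_image_sub_le_of_norm_hasDerivWithin_le
      (f := φ) (f' := deriv φ) (C := M) (s := Set.univ)
      (fun x _ => (hdiff x).hasDerivAt.hasDerivWithinAt) (fun x _ => hMall x)
      convex_univ (Set.mem_univ b) (Set.mem_univ a)
    simpa [Real.norm_eq_abs] using this
  -- the upper bound sequence
  set u : ℕ → ℝ := fun N => Real.sqrt ((Real.log N) ^ (32 : ℕ) / N * (8 * K * M)) with hu
  have hulim : Filter.Tendsto u Filter.atTop (nhds 0) := by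
    have h1 := Real.tendsto_pow_log_div_mul_add_atTop 1 0 32 one_ne_zero
    have h2 : Filter.Tendsto (fun x : ℝ => (Real.log x) ^ (32 : ℕ) / x) Filter.atTop (nhds 0) := by
      simpa using h1
    have h3 : Filter.Tendsto (fun x : ℝ => (Real.log x) ^ (32 : ℕ) / x * (8 * K * M))
        Filter.atTop (nhds 0) := by
      simpa using h2.mul_const (8 * K * M)
    have h4 : Filter.Tendsto (fun N : ℕ => (Real.log N) ^ (32 : ℕ) / N * (8 * K * M))
        Filter.atTop (nhds 0) := h3.comp tendsto_natCast_atTop_atTop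
    have h5 := h4.sqrt
    simpa [hu, Real.sqrt_zero] using h5
  refine tendsto_of_tendsto_of_tendsto_of_le_of_le' tendsto_const_nhds hulim ?_ ?_
  · -- eventually 0 ≤ value N
    refine Filter.eventually_atTop.mpr ⟨1, fun N hN => ?_⟩
    have hN0 : N ≠ 0 := by omega
    haveI : NeZero N := ⟨hN0⟩
    rw [dif_neg hN0]
    refine Finset.sum_nonneg fun η _ => mul_nonneg (hν0 N η) ?_
    -- rewrite the function as |gN - gN η|
    have hs : 0 ≤ ((Real.log N) ^ (32 : ℕ) / (N : ℝ) ^ 2) * (N : ℝ) ^ 2 := by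
      have : ((Real.log N) ^ (32 : ℕ) / (N : ℝ) ^ 2) * (N : ℝ) ^ 2 = (Real.log N) ^ (32 : ℕ) :=
        div_mul_cancel₀ _ (by positivity)
      rw [this]
      exact Even.pow_nonneg ⟨16, rfl⟩ _
    have hGf : (fun η' : Config N => |(1 / (N : ℝ)) *
        ∑ x : ZMod N, φ ((x.val : ℝ) / N) * (ind (η' x) - ind (η x))|)
        = fun η' => |gN φ N η' - gN φ N η| := by
      funext η'
      congr 1
      rw [gN, gN, ← mul_sub, ← Finset.sum_sub_distrib]
      congr 1
      exact Finset.sum_congr rfl fun x _ => by rw [← mul_sub]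
    rw [hGf]
    exact (key_estimate φ hper hK hL hs η).1
  · -- eventually value N ≤ u N
    refine Filter.eventually_atTop.mpr ⟨1, fun N hN => ?_⟩
    have hN0 : N ≠ 0 := by omega
    haveI : NeZero N := ⟨hN0⟩
    have hNR : (0 : ℝ) < N := by exact_mod_cast Nat.pos_of_ne_zero hN0
    rw [dif_neg hN0]
    have hsc : ((Real.log N) ^ (32 : ℕ) / (N : ℝ) ^ 2) * (N : ℝ) ^ 2
        = (Real.log N) ^ (32 : ℕ) := div_mul_cancel₀ _ (by positivity)
    have hs : 0 ≤ ((Real.log N) ^ (32 : ℕ) / (N : ℝ) ^ 2) * (N : ℝ) ^ 2 := by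
      rw [hsc]; exact Even.pow_nonneg ⟨16, rfl⟩ _
    have hsqrt_eq : Real.sqrt ((((Real.log N) ^ (32 : ℕ) / (N : ℝ) ^ 2) * (N : ℝ) ^ 2)
        * (8 * K * M / N)) = u N := by
      rw [hu]
      congr 1
      rw [hsc]
      ring
    calc ∑ η : Config N, ν N η *
          (NormedSpace.exp
              ((((Real.log N) ^ (32 : ℕ) / (N : ℝ) ^ 2) * (N : ℝ) ^ 2) • genE N))
            (fun η' => |(1 / (N : ℝ)) *
                ∑ x : ZMod N, φ ((x.val : ℝ) / N) * (ind (η' x) - ind (η x))|) η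
        ≤ ∑ η : Config N, ν N η * u N := by
          refine Finset.sum_le_sum fun η _ => mul_le_mul_of_nonneg_left ?_ (hν0 N η)
          have hGf : (fun η' : Config N => |(1 / (N : ℝ)) *
              ∑ x : ZMod N, φ ((x.val : ℝ) / N) * (ind (η' x) - ind (η x))|)
              = fun η' => |gN φ N η' - gN φ N η| := by
            funext η'
            congr 1
            rw [gN, gN, ← mul_sub, ← Finset.sum_sub_distrib]
            congr 1
            exact Finset.sum_congr rfl fun x _ => by rw [← mul_sub]
          rw [hGf, ← hsqrt_eq]
          exact (key_estimate φ hper hK hL hs η).2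
      _ = u N := by rw [← Finset.sum_mul, hν1 N, one_mul]

end FEP
end

section
/- Cardinality of the ergodic component: Let N ≥ 1 and let k be an integer with N/2 < k ≤ N−1, and set m = N−k. Then the number of configurations in Ω_N^k equals binom(k,m) + binom(k−1,m−1), which also equals (N/k)·binom(k,N−k). -/
/-!
Read from site `1` to site `N - 1`, a configuration of `Ω_N^k` with a particle at the origin is
a word with `k - 1` ones and `m = N - k` zeros, no two zeros adjacent; there are `binom(k, m)`
of these (the zeros go into distinct gaps among the `k` gaps around the ones).  As `Ω_N^k` is
invariant under rotations, counting the pairs `(η, x)` with `η x = 1` in two ways gives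
`k |Ω_N^k| = N binom(k, m)`, and `k (binom(k, m) + binom(k - 1, m - 1)) = (k + m) binom(k, m)`.
-/

open scoped BigOperators

namespace FEP

open Finset

lemma mul_choose_add_choose_sub_one (k : ℕ) {m : ℕ} (hm : m ≠ 0) :
    k * (k.choose m + (k - 1).choose (m - 1)) = (k + m) * k.choose m := by
  obtain ⟨m, rfl⟩ := Nat.exists_eq_succ_of_ne_zero hm
  cases k with
  | zero => simp
  | succ k =>
    have := Nat.add_one_mul_choose_eq k m
    simp only [Nat.add_sub_cancel, Nat.succ_eq_add_one] at this ⊢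
    rw [mul_add, this]
    ring

lemma forall_apply_add_one_iff {α : Type*} {n : ℕ} (R : α → α → Prop) (φ : Fin (n + 1) → α) :
    (∀ x, R (φ x) (φ (x + 1))) ↔ (List.ofFn φ).IsChain R ∧ R (φ (Fin.last n)) (φ 0) := by
  simp only [List.isChain_iff_getElem, List.length_ofFn, List.getElem_ofFn]
  constructor
  · intro h
    refine ⟨fun i hi => ?_, by simpa using h (Fin.last n)⟩
    have := h (Fin.castSucc ⟨i, by omega⟩)
    rwa [Fin.coeSucc_eq_succ] at this
  · rintro ⟨hchain, hlast⟩ x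
    rcases Fin.eq_castSucc_or_eq_last x with ⟨i, rfl⟩ | rfl
    · rw [Fin.coeSucc_eq_succ]
      exact hchain i (by omega)
    · rwa [Fin.last_add_one]

lemma sum_ite_eq_count_ofFn : ∀ {n : ℕ} (φ : Fin n → Bool),
    ∑ i, (if φ i then 1 else 0) = (List.ofFn φ).count true
  | 0, _ => by simp
  | n + 1, φ => by
    rw [Fin.sum_univ_succ, List.ofFn_succ, List.count_cons, sum_ite_eq_count_ofFn]
    cases φ 0 <;> simp [add_comm]

def sparseWords (n j : ℕ) : Finset (Fin n → Bool) :=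
  {f | (List.ofFn f).IsChain (fun a b => a = true ∨ b = true) ∧ (List.ofFn f).count false = j}

lemma mem_sparseWords {n j : ℕ} {f : Fin n → Bool} :
    f ∈ sparseWords n j ↔
      (List.ofFn f).IsChain (fun a b => a = true ∨ b = true) ∧ (List.ofFn f).count false = j := by
  simp [sparseWords]

lemma sparseWords_zero_right (n : ℕ) : sparseWords n 0 = {fun _ => true} := by
  ext f
  simp only [mem_sparseWords, mem_singleton, funext_iff, List.count_eq_zero, List.mem_ofFn,
    not_exists, Bool.not_eq_false]
  exact ⟨And.right, fun h => ⟨List.isChain_iff_getElem.2 fun i _ => .inl (by simp [h]), h⟩⟩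

lemma sparseWords_eq_empty {n j : ℕ} (h : n < j) : sparseWords n j = ∅ := by
  ext f
  simp only [mem_sparseWords, notMem_empty, iff_false, not_and]
  intro _ hj
  have := (List.ofFn f).count_le_length (a := false)
  simp only [List.length_ofFn] at this
  omega

lemma cons_true_mem_sparseWords {n j : ℕ} {g : Fin n → Bool} :
    Fin.cons true g ∈ sparseWords (n + 1) j ↔ g ∈ sparseWords n j := by
  simp [mem_sparseWords, List.ofFn_succ, List.isChain_cons]

lemma cons_false_cons_true_mem_sparseWords {n j : ℕ} {g : Fin n → Bool} :
    Fin.cons false (Fin.cons true g) ∈ sparseWords (n + 2) (j + 1) ↔ g ∈ sparseWords n j := by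
  simp [mem_sparseWords, List.ofFn_succ, List.isChain_cons]

lemma eq_cons_false_cons_true_of_mem_sparseWords {n j : ℕ} {f : Fin (n + 2) → Bool}
    (hf : f ∈ sparseWords (n + 2) j) (h0 : f 0 = false) :
    f = Fin.cons false (Fin.cons true (Fin.tail (Fin.tail f))) := by
  have h1 : f 1 = true := by simp_all [mem_sparseWords, List.ofFn_succ, List.isChain_cons]
  funext i
  cases i using Fin.cases with
  | zero => simp [h0]
  | succ i => cases i using Fin.cases <;> simp [h1, Fin.tail]

lemma card_filter_sparseWords_head_true (n j : ℕ) :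
    #{f ∈ sparseWords (n + 1) j | f 0 = true} = #(sparseWords n j) := by
  refine card_nbij' Fin.tail (fun g => Fin.cons true g) (fun f hf => ?_) (fun g hg => ?_)
    (fun f hf => ?_) (fun g _ => Fin.tail_cons _ _)
  · simp only [coe_filter, Set.mem_ofPred_eq, mem_coe] at hf ⊢
    rw [← cons_true_mem_sparseWords, ← hf.2, Fin.cons_self_tail]
    exact hf.1
  · simpa [cons_true_mem_sparseWords] using hg
  · simp only [coe_filter, Set.mem_ofPred_eq] at hf
    exact hf.2 ▸ Fin.cons_self_tail f

lemma card_filter_sparseWords_head_false (n j : ℕ) :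
    #{f ∈ sparseWords (n + 2) (j + 1) | f 0 = false} = #(sparseWords n j) := by
  refine card_nbij' (fun f => Fin.tail (Fin.tail f))
    (fun g => Fin.cons false (Fin.cons true g)) (fun f hf => ?_) (fun g hg => ?_)
    (fun f hf => ?_) (fun g _ => by simp)
  · simp only [coe_filter, Set.mem_ofPred_eq] at hf
    have := eq_cons_false_cons_true_of_mem_sparseWords hf.1 hf.2
    rw [mem_coe, ← cons_false_cons_true_mem_sparseWords, ← this]
    exact hf.1
  · simpa [cons_false_cons_true_mem_sparseWords] using hg
  · simp only [coe_filter, Set.mem_ofPred_eq] at hf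
    exact (eq_cons_false_cons_true_of_mem_sparseWords hf.1 hf.2).symm

theorem card_sparseWords : ∀ n j : ℕ, #(sparseWords n j) = (n + 1 - j).choose j
  | n, 0 => by simp [sparseWords_zero_right]
  | 0, j + 1 => by simp [sparseWords_eq_empty]
  | 1, 1 => by decide
  | 1, j + 2 => by simp [sparseWords_eq_empty]
  | n + 2, j + 1 => by
    rw [← card_filter_add_card_filter_not (fun f : Fin (n + 2) → Bool => f 0 = true)]
    simp only [Bool.not_eq_true]
    rw [card_filter_sparseWords_head_true, card_filter_sparseWords_head_false,
      card_sparseWords (n + 1) (j + 1), card_sparseWords n j]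
    rcases le_or_gt j (n + 1) with h | h
    · rw [show n + 2 + 1 - (j + 1) = n + 1 - j + 1 by omega,
        show n + 1 + 1 - (j + 1) = n + 1 - j by omega, Nat.choose_succ_succ', add_comm]
    · rw [show n + 1 - j = 0 by omega, show n + 2 + 1 - (j + 1) = 0 by omega,
        Nat.choose_eq_zero_of_lt (by omega), Nat.choose_eq_zero_of_lt (by omega),
        Nat.choose_eq_zero_of_lt (by omega)]

lemma numParticles_eq_count_ofFn {N : ℕ} [NeZero N] (η : Config N) :
    numParticles η = (List.ofFn (η ∘ ZMod.finEquiv N)).count true := by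
  rw [numParticles, ← (ZMod.finEquiv N).toEquiv.sum_comp, ← sum_ite_eq_count_ofFn]
  rfl

lemma numParticles_comp_add_right {N : ℕ} [NeZero N] (η : Config N) (y : ZMod N) :
    numParticles (fun x => η (x + y)) = numParticles η :=
  Equiv.sum_comp (Equiv.addRight y) (fun x => if η x then 1 else 0)

lemma comp_add_right_mem_ergodicSet {N : ℕ} [NeZero N] {η : Config N} (hη : η ∈ ergodicSet N)
    (y : ZMod N) : (fun x => η (x + y)) ∈ ergodicSet N := by
  refine ⟨fun x => ?_, (numParticles_comp_add_right η y).symm ▸ hη.2⟩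
  simpa only [add_right_comm x 1 y] using hη.1 (x + y)

lemma card_filter_apply_eq_card_filter_apply_zero {N : ℕ} {S : Finset (Config N)}
    (hS : ∀ η ∈ S, ∀ y, (fun x => η (x + y)) ∈ S) (x : ZMod N) :
    #{η ∈ S | η x = true} = #{η ∈ S | η 0 = true} := by
  refine card_nbij' (fun η z => η (z + x)) (fun η z => η (z + -x)) (fun η hη => ?_)
    (fun η hη => ?_) (fun η _ => by simp) (fun η _ => by simp)
  · simp only [coe_filter, Set.mem_ofPred_eq] at hη ⊢
    exact ⟨hS η hη.1 x, by simpa using hη.2⟩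
  · simp only [coe_filter, Set.mem_ofPred_eq] at hη ⊢
    exact ⟨hS η hη.1 (-x), by simpa using hη.2⟩

lemma sum_numParticles_eq_mul_card_filter {N : ℕ} [NeZero N] {S : Finset (Config N)}
    (hS : ∀ η ∈ S, ∀ y, (fun x => η (x + y)) ∈ S) :
    ∑ η ∈ S, numParticles η = N * #{η ∈ S | η 0 = true} := by
  calc ∑ η ∈ S, numParticles η = ∑ x : ZMod N, #{η ∈ S | η x = true} := by
        simp only [numParticles, card_filter]
        exact sum_comm
    _ = N * #{η ∈ S | η 0 = true} := by
        simp [card_filter_apply_eq_card_filter_apply_zero hS, ZMod.card]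

open Classical in
/-- The ergodic component `Ω_N^k`. -/
noncomputable def ergodicComponent (N k : ℕ) [NeZero N] : Finset (Config N) :=
  {η | η ∈ ergodicSet N ∧ numParticles η = k}

lemma mem_ergodicComponent {N k : ℕ} [NeZero N] {η : Config N} :
    η ∈ ergodicComponent N k ↔ η ∈ ergodicSet N ∧ numParticles η = k := by
  simp [ergodicComponent]

lemma mul_card_ergodicComponent (N k : ℕ) [NeZero N] :
    k * #(ergodicComponent N k) = N * #{η ∈ ergodicComponent N k | η 0 = true} := by
  calc k * #(ergodicComponent N k) = ∑ η ∈ ergodicComponent N k, numParticles η := by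
        rw [sum_congr rfl fun η hη => (mem_ergodicComponent.1 hη).2, sum_const, smul_eq_mul,
          mul_comm]
    _ = N * #{η ∈ ergodicComponent N k | η 0 = true} := by
        refine sum_numParticles_eq_mul_card_filter fun η hη y => ?_
        rw [mem_ergodicComponent] at hη ⊢
        exact ⟨comp_add_right_mem_ergodicSet hη.1 y,
          (numParticles_comp_add_right η y).trans hη.2⟩

lemma mem_ergodicComponent_iff_mem_sparseWords {n k : ℕ} (h1 : n + 1 < 2 * k) (h2 : k ≤ n + 1)
    {η : Config (n + 1)} (h0 : η 0 = true) :
    η ∈ ergodicComponent (n + 1) k ↔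
      η ∘ ZMod.finEquiv (n + 1) ∈ sparseWords (n + 1) (n + 1 - k) := by
  have hcyc : (∀ x, η x = true ∨ η (x + 1) = true) ↔
      (List.ofFn (η ∘ ZMod.finEquiv (n + 1))).IsChain (fun a b => a = true ∨ b = true) := by
    refine Iff.trans ?_ ((forall_apply_add_one_iff _ _).trans (and_iff_left (by simp [h0])))
    simp [(ZMod.finEquiv (n + 1)).surjective.forall]
  have hcount := List.count_true_add_count_false (List.ofFn (η ∘ ZMod.finEquiv (n + 1)))
  rw [List.length_ofFn] at hcount
  rw [mem_ergodicComponent, ergodicSet, Set.mem_ofPred_eq, hcyc, numParticles_eq_count_ofFn,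
    mem_sparseWords]
  constructor
  · rintro ⟨⟨hchain, -⟩, hk⟩
    exact ⟨hchain, by omega⟩
  · rintro ⟨hchain, hk⟩
    exact ⟨⟨hchain, by omega⟩, by omega⟩

lemma card_filter_ergodicComponent_apply_zero {n k : ℕ} (h1 : n + 1 < 2 * k) (h2 : k ≤ n + 1) :
    #{η ∈ ergodicComponent (n + 1) k | η 0 = true} = k.choose (n + 1 - k) := by
  let e := ZMod.finEquiv (n + 1)
  calc #{η ∈ ergodicComponent (n + 1) k | η 0 = true}
      = #{φ ∈ sparseWords (n + 1) (n + 1 - k) | φ 0 = true} := by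
        refine card_nbij' (· ∘ e) (· ∘ e.symm) (fun η hη => ?_) (fun φ hφ => ?_)
          (fun η _ => by ext; simp) (fun φ _ => by ext; simp)
        · simp only [coe_filter, Set.mem_ofPred_eq] at hη ⊢
          exact ⟨(mem_ergodicComponent_iff_mem_sparseWords h1 h2 hη.2).1 hη.1, by simp [e, hη.2]⟩
        · simp only [coe_filter, Set.mem_ofPred_eq] at hφ ⊢
          have h0 : (φ ∘ e.symm) 0 = true := by simp [hφ.2]
          refine ⟨(mem_ergodicComponent_iff_mem_sparseWords h1 h2 h0).2 ?_, h0⟩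
          convert hφ.1 using 1
          ext; simp [e]
    _ = #(sparseWords n (n + 1 - k)) := card_filter_sparseWords_head_true _ _
    _ = k.choose (n + 1 - k) := by rw [card_sparseWords, show n + 1 - (n + 1 - k) = k by omega]

/-- **Cardinality of the ergodic component `Ω_N^k`.**  For `N/2 < k ≤ N−1` and `m = N−k`,
`|Ω_N^k| = binom(k,m) + binom(k−1,m−1) = (N/k)·binom(k,N−k)`. -/
theorem card_ergodic_component (N k : ℕ) [NeZero N] (h1 : N < 2 * k) (h2 : k ≤ N - 1) :
    Nat.card {η : Config N // η ∈ ergodicSet N ∧ numParticles η = k}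
        = Nat.choose k (N - k) + Nat.choose (k - 1) (N - k - 1) ∧
      (Nat.card {η : Config N // η ∈ ergodicSet N ∧ numParticles η = k} : ℝ)
        = (N : ℝ) / k * Nat.choose k (N - k) := by
  obtain ⟨n, rfl⟩ : ∃ n, N = n + 1 := ⟨N - 1, (Nat.succ_pred_eq_of_pos (NeZero.pos N)).symm⟩
  have hmul : k * #(ergodicComponent (n + 1) k) = (n + 1) * k.choose (n + 1 - k) := by
    rw [mul_card_ergodicComponent, card_filter_ergodicComponent_apply_zero h1 (by omega)]
  have hcard : #(ergodicComponent (n + 1) k)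
      = k.choose (n + 1 - k) + (k - 1).choose (n + 1 - k - 1) := by
    refine Nat.eq_of_mul_eq_mul_left (by omega : 0 < k) ?_
    rw [hmul, mul_choose_add_choose_sub_one k (by omega), show k + (n + 1 - k) = n + 1 by omega]
  rw [Nat.subtype_card _ fun _ => mem_ergodicComponent]
  refine ⟨hcard, ?_⟩
  rw [div_mul_eq_mul_div, eq_div_iff (by norm_cast; omega), mul_comm]
  exact_mod_cast hmul

end FEP
end

section
/- Counting ergodic configurations with a prescribed local restriction: Let N ≥ 1, let k be an integer with N/2 < k ≤ N−1, set m = N−k, and let 1 ≤ ℓ ≤ N−1. Let σ ∈ {0,1}^{Λ_ℓ} have no two adjacent empty sites, with p = Σ_{x∈Λ_ℓ} σ(x) particles and z = ℓ−p empty sites, and assume p ≤ k and z ≤ m. Then the number of configurations η ∈ Ω_N^k with η(x) = σ(x) for all x ∈ Λ_ℓ equals binom(k−p+σ(1)+σ(ℓ)−1, m−z), with the convention that binom(a,b) = 0 when b > a. -/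
open scoped BigOperators

namespace FEP




/-- The number of particles of `σ` in `Λ_ℓ = {1,…,ℓ}`. -/
def pcount (ℓ : ℕ) (σ : ℕ → Bool) : ℕ :=
  ∑ x ∈ Finset.Icc 1 ℓ, (if σ x then 1 else 0)

/-- The finset of `b`-element subsets of `range L` with no two consecutive elements,
with flags: `e0 = false` forbids `0`, `e1 = false` forbids `L-1`. -/
def Fset (L b : ℕ) (e0 e1 : Bool) : Finset (Finset ℕ) :=
  (Finset.powersetCard b (Finset.range L)).filter
    (fun S => (∀ i ∈ S, i + 1 ∉ S) ∧ (e0 = false → 0 ∉ S) ∧ (e1 = false → L - 1 ∉ S))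

lemma mem_Fset {L b : ℕ} {e0 e1 : Bool} {S : Finset ℕ} :
    S ∈ Fset L b e0 e1 ↔ (S ⊆ Finset.range L ∧ S.card = b) ∧
      (∀ i ∈ S, i + 1 ∉ S) ∧ (e0 = false → 0 ∉ S) ∧ (e1 = false → L - 1 ∉ S) := by
  simp [Fset, Finset.mem_filter, Finset.mem_powersetCard]

lemma Fset_zero (L : ℕ) (e0 e1 : Bool) : Fset L 0 e0 e1 = {∅} := by
  ext S
  simp only [mem_Fset, Finset.mem_singleton, Finset.card_eq_zero]
  constructor
  · rintro ⟨⟨-, h⟩, -⟩; exact h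
  · rintro rfl; simp


lemma Fset_top (L b : ℕ) (e0 : Bool) :
    Fset L b e0 false = Fset (L - 1) b e0 true := by
  ext S
  simp only [mem_Fset]
  constructor
  · rintro ⟨⟨hsub, hcard⟩, hnc, h0, hL⟩
    have hL' : L - 1 ∉ S := hL (by trivial)
    refine ⟨⟨fun i hi => ?_, hcard⟩, hnc, h0, by simp⟩
    have h1 := Finset.mem_range.1 (hsub hi)
    have h2 : i ≠ L - 1 := fun h => hL' (h ▸ hi)
    exact Finset.mem_range.2 (by omega)
  · rintro ⟨⟨hsub, hcard⟩, hnc, h0, -⟩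
    have hL' : L - 1 ∉ S := fun h => by have := Finset.mem_range.1 (hsub h); omega
    refine ⟨⟨fun i hi => ?_, hcard⟩, hnc, h0, fun _ _ => hL' (by assumption)⟩
    have := Finset.mem_range.1 (hsub hi)
    exact Finset.mem_range.2 (by omega)

lemma reflect_mem {L b : ℕ} {e0 e1 : Bool} {S : Finset ℕ} (h : S ∈ Fset L b e0 e1) :
    S.image (fun i => L - 1 - i) ∈ Fset L b e1 e0 := by
  obtain ⟨⟨hsub, hcard⟩, hnc, h0, h1⟩ := mem_Fset.1 h
  have hb : ∀ i ∈ S, i < L := fun i hi => Finset.mem_range.1 (hsub hi)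
  have hinj : Set.InjOn (fun i => L - 1 - i) S := fun i hi j hj hij => by
    have := hb i hi; have := hb j hj; simp only at hij; omega
  refine mem_Fset.2 ⟨⟨?_, ?_⟩, ?_, ?_, ?_⟩
  · intro x hx
    obtain ⟨i, hi, rfl⟩ := Finset.mem_image.1 hx
    exact Finset.mem_range.2 (by have := hb i hi; omega)
  · rw [Finset.card_image_of_injOn hinj, hcard]
  · intro x hx hx1
    obtain ⟨i, hi, rfl⟩ := Finset.mem_image.1 hx
    obtain ⟨j, hj, hji⟩ := Finset.mem_image.1 hx1
    have hbi := hb i hi; have hbj := hb j hj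
    have hji' : j + 1 = i := by omega
    exact hnc j hj (hji' ▸ hi)
  · intro he hx
    obtain ⟨i, hi, hi0⟩ := Finset.mem_image.1 hx
    have := hb i hi
    have hieq : i = L - 1 := by omega
    exact h1 he (hieq ▸ hi)
  · intro he hx
    obtain ⟨i, hi, hi0⟩ := Finset.mem_image.1 hx
    have := hb i hi
    have hieq : i = 0 := by omega
    exact h0 he (hieq ▸ hi)

lemma reflect_reflect {L : ℕ} {S : Finset ℕ} (hsub : S ⊆ Finset.range L) :
    (S.image (fun i => L - 1 - i)).image (fun i => L - 1 - i) = S := by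
  ext x
  simp only [Finset.mem_image]
  constructor
  · rintro ⟨y, ⟨i, hi, rfl⟩, rfl⟩
    have := Finset.mem_range.1 (hsub hi)
    have hieq : L - 1 - (L - 1 - i) = i := by omega
    rw [hieq]; exact hi
  · intro hx
    have := Finset.mem_range.1 (hsub hx)
    exact ⟨L - 1 - x, ⟨x, hx, rfl⟩, by omega⟩

lemma Fset_card_reflect (L b : ℕ) (e0 e1 : Bool) :
    (Fset L b e0 e1).card = (Fset L b e1 e0).card := by
  refine Finset.card_bij' (fun S _ => S.image (fun i => L - 1 - i))
    (fun S _ => S.image (fun i => L - 1 - i))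
    (fun S hS => reflect_mem hS) (fun S hS => reflect_mem hS) ?_ ?_
  · intro S hS; exact reflect_reflect (mem_Fset.1 hS).1.1
  · intro S hS; exact reflect_reflect (mem_Fset.1 hS).1.1

lemma Fset_succ_card (L b : ℕ) :
    (Fset (L + 1) (b + 1) true true).card
      = (Fset L (b + 1) true true).card + (Fset (L - 1) b true true).card := by
  classical
  have hsplit := Finset.card_filter_add_card_filter_not
    (s := Fset (L + 1) (b + 1) true true) (p := fun S => L ∈ S)
  have hA : (Fset (L + 1) (b + 1) true true).filter (fun S => ¬ L ∈ S)
      = Fset L (b + 1) true true := by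
    ext S
    simp only [Finset.mem_filter, mem_Fset]
    constructor
    · rintro ⟨⟨⟨hsub, hcard⟩, hnc, -, -⟩, hL⟩
      refine ⟨⟨fun i hi => ?_, hcard⟩, hnc, by simp, by simp⟩
      have := Finset.mem_range.1 (hsub hi)
      have : i ≠ L := fun h => hL (h ▸ hi)
      exact Finset.mem_range.2 (by omega)
    · rintro ⟨⟨hsub, hcard⟩, hnc, -, -⟩
      have hL : L ∉ S := fun h => by have := Finset.mem_range.1 (hsub h); omega
      refine ⟨⟨⟨fun i hi => ?_, hcard⟩, hnc, by simp, by simp⟩, hL⟩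
      have := Finset.mem_range.1 (hsub hi)
      exact Finset.mem_range.2 (by omega)
  have hB : ((Fset (L + 1) (b + 1) true true).filter (fun S => L ∈ S)).card
      = (Fset (L - 1) b true true).card := by
    refine Finset.card_bij' (fun S _ => S.erase L) (fun T _ => insert L T) ?_ ?_ ?_ ?_
    · intro S hS
      rw [Finset.mem_filter, mem_Fset] at hS
      obtain ⟨⟨⟨hsub, hcard⟩, hnc, -, -⟩, hL⟩ := hS
      refine mem_Fset.2 ⟨⟨fun i hi => ?_, ?_⟩, ?_, by simp, by simp⟩
      · obtain ⟨hne, hiS⟩ := Finset.mem_erase.1 hi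
        have h1 := Finset.mem_range.1 (hsub hiS)
        have h2 : i ≠ L - 1 := by
          intro h
          have h3 : i + 1 = L := by omega
          exact hnc i hiS (h3 ▸ hL)
        exact Finset.mem_range.2 (by omega)
      · rw [Finset.card_erase_of_mem hL, hcard]; rfl
      · intro i hi hi1
        obtain ⟨-, hiS⟩ := Finset.mem_erase.1 hi
        exact hnc i hiS (Finset.mem_erase.1 hi1).2
    · intro T hT
      obtain ⟨⟨hsub, hcard⟩, hnc, -, -⟩ := mem_Fset.1 hT
      have hLT : L ∉ T := fun h => by have := Finset.mem_range.1 (hsub h); omega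
      rw [Finset.mem_filter]
      refine ⟨mem_Fset.2 ⟨⟨fun i hi => ?_, ?_⟩, ?_, by simp, by simp⟩, Finset.mem_insert_self _ _⟩
      · rcases Finset.mem_insert.1 hi with rfl | hiT
        · exact Finset.mem_range.2 (by omega)
        · have := Finset.mem_range.1 (hsub hiT)
          exact Finset.mem_range.2 (by omega)
      · rw [Finset.card_insert_of_notMem hLT, hcard]
      · intro i hi hi1
        rcases Finset.mem_insert.1 hi with rfl | hiT
        · rcases Finset.mem_insert.1 hi1 with h | h
          · omega
          · have := Finset.mem_range.1 (hsub h); omega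
        · rcases Finset.mem_insert.1 hi1 with h | h
          · have := Finset.mem_range.1 (hsub hiT); omega
          · exact hnc i hiT h
    · intro S hS
      exact Finset.insert_erase (Finset.mem_filter.1 hS).2
    · intro T hT
      apply Finset.erase_insert
      obtain ⟨⟨hsub, -⟩, -⟩ := mem_Fset.1 hT
      exact fun h => by have := Finset.mem_range.1 (hsub h); omega
  rw [hB] at hsplit
  have hA' : ((Fset (L + 1) (b + 1) true true).filter (fun S => ¬ L ∈ S)).card
      = (Fset L (b + 1) true true).card := by rw [hA]
  omega

lemma Fcard_tt (L : ℕ) : ∀ b, (Fset L b true true).card = Nat.choose (L + 1 - b) b := by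
  induction L using Nat.strong_induction_on with
  | _ L ih =>
    intro b
    match b with
    | 0 => rw [Fset_zero]; simp
    | b + 1 =>
      match L with
      | 0 =>
        have hempty : Fset 0 (b + 1) true true = ∅ := by
          ext S
          simp only [mem_Fset, Finset.notMem_empty, iff_false]
          rintro ⟨⟨hsub, hcard⟩, -⟩
          have : S = ∅ := Finset.subset_empty.1 (by simpa using hsub)
          simp [this] at hcard
        rw [hempty]
        have : 0 + 1 - (b + 1) = 0 := by omega
        rw [this]
        simp [Nat.choose_eq_zero_of_lt]
      | L + 1 =>
        rw [Fset_succ_card, ih L (by omega) (b + 1), ih (L - 1) (by omega) b]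
        by_cases hbL : b + 1 ≤ L
        · have e1 : L + 1 - (b + 1) = L - b := by omega
          have e2 : L - 1 + 1 - b = L - b := by omega
          have e3 : L + 1 + 1 - (b + 1) = (L - b) + 1 := by omega
          rw [e1, e2, e3, Nat.choose_succ_succ' (L - b) b]
          ring
        · by_cases hL0 : L = 0
          · subst hL0
            match b with
            | 0 => decide
            | b + 1 => simp
          · have r1 : Nat.choose (L + 1 - (b + 1)) (b + 1) = 0 :=
              Nat.choose_eq_zero_of_lt (by omega)
            have r2 : Nat.choose (L - 1 + 1 - b) b = 0 :=
              Nat.choose_eq_zero_of_lt (by omega)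
            have r3 : Nat.choose (L + 1 + 1 - (b + 1)) (b + 1) = 0 :=
              Nat.choose_eq_zero_of_lt (by omega)
            rw [r1, r2, r3]

lemma Fset_card (L b : ℕ) (hL : 1 ≤ L) (hb : b ≤ L) (e0 e1 : Bool) :
    (Fset L b e0 e1).card
      = Nat.choose ((L - b) + (if e0 then 1 else 0) + (if e1 then 1 else 0) - 1) b := by
  match b with
  | 0 => rw [Fset_zero]; simp
  | b + 1 =>
    cases e0 <;> cases e1
    · -- false false
      rw [Fset_top, Fset_card_reflect, Fset_top, Fcard_tt]
      norm_num
      congr 1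
      omega
    · -- false true
      rw [Fset_card_reflect, Fset_top, Fcard_tt]
      norm_num
      congr 1
      omega
    · -- true false
      rw [Fset_top, Fcard_tt]
      norm_num
      congr 1
      omega
    · -- true true
      rw [Fcard_tt]
      norm_num
      congr 1
      omega


section Reduction

variable {N : ℕ} [NeZero N]

lemma cast_val (x : ZMod N) : ((x.val : ℕ) : ZMod N) = x :=
  ZMod.natCast_rightInverse x

lemma valcast (v : ℕ) (h : v < N) : ((v : ℕ) : ZMod N).val = v := by
  rw [ZMod.val_natCast]; exact Nat.mod_eq_of_lt h

lemma sum_zmod (f : ZMod N → ℕ) :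
    ∑ x : ZMod N, f x = ∑ v ∈ Finset.range N, f ((v : ℕ) : ZMod N) := by
  refine Finset.sum_nbij' (fun x => x.val) (fun v => ((v : ℕ) : ZMod N)) ?_ ?_ ?_ ?_ ?_
  · intro a _; exact Finset.mem_range.2 a.val_lt
  · intro a _; exact Finset.mem_univ _
  · intro a _; exact cast_val a
  · intro a ha; exact valcast a (Finset.mem_range.1 ha)
  · intro a _; rw [cast_val]

lemma sum_split {ℓ : ℕ} (f : ℕ → ℕ) (hℓ : ℓ < N) :
    ∑ v ∈ Finset.range N, f v
      = f 0 + (∑ x ∈ Finset.Icc 1 ℓ, f x) + ∑ j ∈ Finset.range (N - ℓ - 1), f (ℓ + 1 + j) := by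
  rw [Finset.range_eq_Ico,
    ← Finset.sum_Ico_consecutive f (Nat.zero_le (ℓ + 1)) (by omega : ℓ + 1 ≤ N)]
  have hA : ∑ v ∈ Finset.Ico 0 (ℓ + 1), f v = f 0 + ∑ x ∈ Finset.Icc 1 ℓ, f x := by
    rw [← Finset.range_eq_Ico, Finset.sum_range_succ' f ℓ, add_comm]
    congr 1
    rw [show Finset.Icc 1 ℓ = Finset.Ico 1 (ℓ + 1) from (Finset.Ico_add_one_right_eq_Icc 1 ℓ).symm,
      Finset.sum_Ico_eq_sum_range]
    simp [Nat.add_comm]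
  have hB : ∑ v ∈ Finset.Ico (ℓ + 1) N, f v = ∑ j ∈ Finset.range (N - ℓ - 1), f (ℓ + 1 + j) := by
    rw [Finset.sum_Ico_eq_sum_range]
    have h1 : N - (ℓ + 1) = N - ℓ - 1 := by omega
    rw [h1]
  rw [hA, hB, Finset.range_eq_Ico]

lemma particles_eq {ℓ : ℕ} (η : Config N) (hℓ : ℓ < N) :
    numParticles η = (if η 0 then 1 else 0)
      + (∑ x ∈ Finset.Icc 1 ℓ, if η ((x : ℕ) : ZMod N) then 1 else 0)
      + ∑ j ∈ Finset.range (N - ℓ - 1), (if η ((ℓ + 1 + j : ℕ) : ZMod N) then 1 else 0) := by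
  rw [numParticles, sum_zmod (f := fun x => if η x then 1 else 0),
    sum_split (f := fun v => if η ((v : ℕ) : ZMod N) then 1 else 0) hℓ]
  norm_num

lemma pcount_le (ℓ : ℕ) (σ : ℕ → Bool) : pcount ℓ σ ≤ ℓ := by
  rw [pcount]
  calc ∑ x ∈ Finset.Icc 1 ℓ, (if σ x then 1 else 0)
      ≤ ∑ _x ∈ Finset.Icc 1 ℓ, 1 := Finset.sum_le_sum (fun i _ => by split <;> omega)
    _ = ℓ := by simp

end Reduction


section Maps

/-- Set of empty sites of `η` along the arc `{ℓ+1, …, N}` (indexed by `0,…,N-ℓ-1`). -/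
def fwdSet (N ℓ : ℕ) (η : Config N) : Finset ℕ :=
  (Finset.range (N - ℓ)).filter (fun j => η ((ℓ + 1 + j : ℕ) : ZMod N) = false)

/-- Configuration built from `σ` on `Λ_ℓ` and the prescribed empty sites `S` on the arc. -/
def bwdCfg (N ℓ : ℕ) (σ : ℕ → Bool) (S : Finset ℕ) : Config N := fun x =>
  if x.val = 0 then ! decide ((N - ℓ - 1) ∈ S)
  else if x.val ≤ ℓ then σ x.val
  else ! decide ((x.val - (ℓ + 1)) ∈ S)

variable {N : ℕ} [NeZero N]

lemma bwd_at {ℓ : ℕ} (σ : ℕ → Bool) (S : Finset ℕ) (u : ℕ) (hu : u < N) :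
    bwdCfg N ℓ σ S ((u : ℕ) : ZMod N)
      = if u = 0 then ! decide ((N - ℓ - 1) ∈ S)
        else if u ≤ ℓ then σ u
        else ! decide ((u - (ℓ + 1)) ∈ S) := by
  rw [bwdCfg, valcast u hu]

lemma arc_sum_compl {L : ℕ} (S : Finset ℕ) (hsub : S ⊆ Finset.range L) :
    ∑ j ∈ Finset.range L, (if (! decide (j ∈ S)) = true then 1 else 0) = L - S.card := by
  classical
  have hsum : (∑ j ∈ Finset.range L, (if (! decide (j ∈ S)) = true then 1 else 0))
      + (∑ j ∈ Finset.range L, (if j ∈ S then 1 else 0)) = L := by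
    rw [← Finset.sum_add_distrib]
    have hone : ∀ j ∈ Finset.range L,
        ((if (! decide (j ∈ S)) = true then 1 else 0) + (if j ∈ S then (1:ℕ) else 0)) = 1 := by
      intro j _; by_cases h : j ∈ S <;> simp [h]
    rw [Finset.sum_congr rfl hone]; simp
  have hcard : ∑ j ∈ Finset.range L, (if j ∈ S then (1:ℕ) else 0) = S.card := by
    rw [Finset.sum_ite_mem, Finset.inter_eq_right.2 hsub, Finset.sum_const, smul_eq_mul, mul_one]
  omega

lemma bwd_restrict {ℓ : ℕ} (σ : ℕ → Bool) (S : Finset ℕ) (hℓ : ℓ ≤ N - 1) (h2N : 2 ≤ N) :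
    ∀ x ∈ Finset.Icc 1 ℓ, (bwdCfg N ℓ σ S) ((x : ℕ) : ZMod N) = σ x := by
  intro x hx
  obtain ⟨hx1, hx2⟩ := Finset.mem_Icc.1 hx
  rw [bwd_at σ S x (by omega), if_neg (by omega), if_pos hx2]

lemma bwd_particles {ℓ : ℕ} (σ : ℕ → Bool) (S : Finset ℕ) (hℓ1 : 1 ≤ ℓ) (hℓ : ℓ ≤ N - 1)
    (h2N : 2 ≤ N) (hsub : S ⊆ Finset.range (N - ℓ)) :
    numParticles (bwdCfg N ℓ σ S) = pcount ℓ σ + ((N - ℓ) - S.card) := by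
  classical
  rw [particles_eq (ℓ := ℓ) _ (by omega)]
  have t0 : (bwdCfg N ℓ σ S) 0 = ! decide ((N - ℓ - 1) ∈ S) := by
    show (if (0 : ZMod N).val = 0 then _ else _) = _
    rw [ZMod.val_zero, if_pos rfl]
  have t1 : (∑ x ∈ Finset.Icc 1 ℓ, if (bwdCfg N ℓ σ S) ((x : ℕ) : ZMod N) then 1 else 0)
      = pcount ℓ σ := by
    rw [pcount]
    refine Finset.sum_congr rfl (fun x hx => ?_)
    rw [bwd_restrict σ S hℓ h2N x hx]
  have t2 : (∑ j ∈ Finset.range (N - ℓ - 1),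
        if (bwdCfg N ℓ σ S) ((ℓ + 1 + j : ℕ) : ZMod N) then 1 else 0)
      = ∑ j ∈ Finset.range (N - ℓ - 1), (if (! decide (j ∈ S)) = true then 1 else 0) := by
    refine Finset.sum_congr rfl (fun j hj => ?_)
    have hj' := Finset.mem_range.1 hj
    rw [bwd_at σ S (ℓ + 1 + j) (by omega), if_neg (show ¬(ℓ + 1 + j = 0) by omega),
      if_neg (show ¬(ℓ + 1 + j ≤ ℓ) by omega), show ℓ + 1 + j - (ℓ + 1) = j by omega]
  rw [t0, t1, t2]
  have harc := arc_sum_compl S hsub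
  have hcard : S.card ≤ N - ℓ := by
    have := Finset.card_le_card hsub; simpa using this
  have hL1 : N - ℓ = (N - ℓ - 1) + 1 := by omega
  rw [hL1, Finset.sum_range_succ] at harc
  omega

lemma bwd_ergodic {ℓ b : ℕ} (σ : ℕ → Bool) (S : Finset ℕ) (hℓ1 : 1 ≤ ℓ) (hℓ : ℓ ≤ N - 1)
    (hσ : ∀ x ∈ Finset.Ico 1 ℓ, σ x = true ∨ σ (x + 1) = true)
    (hS : S ∈ Fset (N - ℓ) b (σ ℓ) (σ 1)) :
    ∀ x : ZMod N, (bwdCfg N ℓ σ S) x = true ∨ (bwdCfg N ℓ σ S) (x + 1) = true := by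
  obtain ⟨⟨hsub, hcard⟩, hnc, h0, h1⟩ := mem_Fset.1 hS
  have h2N : 2 ≤ N := by omega
  intro x
  have hvN : x.val < N := x.val_lt
  set v := x.val with hv
  have hx : x = ((v : ℕ) : ZMod N) := (cast_val x).symm
  have hx1 : x + 1 = ((v + 1 : ℕ) : ZMod N) := by rw [hx]; push_cast; ring
  by_cases hvtop : v = N - 1
  · have hx1' : x + 1 = ((0 : ℕ) : ZMod N) := by
      rw [hx1, hvtop, show N - 1 + 1 = N by omega]
      simp [ZMod.natCast_self]
    rw [hx1', hx, bwd_at σ S v hvN, bwd_at σ S 0 (by omega), if_pos rfl]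
    by_cases hvl : v ≤ ℓ
    · have hveq : v = ℓ := by omega
      rw [if_neg (show ¬(v = 0) by omega), if_pos hvl, hveq]
      have hNl : N - ℓ - 1 = 0 := by omega
      rw [hNl]
      cases hsl : σ ℓ with
      | true => exact Or.inl rfl
      | false =>
        right
        have : 0 ∉ S := h0 hsl
        simp [this]
    · rw [if_neg (show ¬(v = 0) by omega), if_neg (show ¬(v ≤ ℓ) by omega)]
      by_cases hmem : v - (ℓ + 1) ∈ S
      · right
        have h2 : (v - (ℓ + 1)) + 1 ∉ S := hnc _ hmem
        have h3 : N - ℓ - 1 = (v - (ℓ + 1)) + 1 := by omega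
        rw [h3]
        simp [h2]
      · left; simp [hmem]
  · have hv1N : v + 1 < N := by omega
    rw [hx1, hx, bwd_at σ S v hvN, bwd_at σ S (v + 1) hv1N]
    by_cases hv0 : v = 0
    · rw [if_pos hv0, if_neg (show ¬(v + 1 = 0) by omega), if_pos (show v + 1 ≤ ℓ by omega)]
      cases hs1 : σ (v + 1) with
      | true => exact Or.inr rfl
      | false =>
        left
        have hs1' : σ 1 = false := by rw [hv0] at hs1; simpa using hs1
        have : N - ℓ - 1 ∉ S := h1 hs1'
        simp [this]
    · rw [if_neg hv0]
      by_cases hvl : v ≤ ℓ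
      · rw [if_pos hvl, if_neg (show ¬(v + 1 = 0) by omega)]
        by_cases hvl' : v + 1 ≤ ℓ
        · rw [if_pos hvl']
          exact hσ v (Finset.mem_Ico.2 ⟨by omega, by omega⟩)
        · rw [if_neg hvl']
          have hveq : v = ℓ := by omega
          rw [hveq, show ℓ + 1 - (ℓ + 1) = 0 by omega]
          cases hsl : σ ℓ with
          | true => exact Or.inl rfl
          | false =>
            right
            have : 0 ∉ S := h0 hsl
            simp [this]
      · rw [if_neg hvl, if_neg (show ¬(v + 1 = 0) by omega), if_neg (show ¬(v + 1 ≤ ℓ) by omega)]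
        by_cases hmem : v - (ℓ + 1) ∈ S
        · right
          have h2 : (v - (ℓ + 1)) + 1 ∉ S := hnc _ hmem
          have h3 : v + 1 - (ℓ + 1) = (v - (ℓ + 1)) + 1 := by omega
          rw [h3]
          simp [h2]
        · left; simp [hmem]

end Maps


section Fwd

variable {N : ℕ} [NeZero N]

lemma bwd_zero {ℓ : ℕ} (σ : ℕ → Bool) (S : Finset ℕ) :
    bwdCfg N ℓ σ S 0 = ! decide ((N - ℓ - 1) ∈ S) := by
  show (if (0 : ZMod N).val = 0 then _ else _) = _
  rw [ZMod.val_zero, if_pos rfl]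

lemma fwd_card {ℓ k : ℕ} (σ : ℕ → Bool) (η : Config N) (hℓ1 : 1 ≤ ℓ) (hℓ : ℓ ≤ N - 1)
    (hres : ∀ x ∈ Finset.Icc 1 ℓ, η ((x : ℕ) : ZMod N) = σ x)
    (hnum : numParticles η = k) :
    (fwdSet N ℓ η).card = (N - ℓ) - (k - pcount ℓ σ) := by
  classical
  have h2N : 2 ≤ N := by omega
  have key : (fwdSet N ℓ η).card
      + ∑ j ∈ Finset.range (N - ℓ), (if η ((ℓ + 1 + j : ℕ) : ZMod N) then 1 else 0)
      = N - ℓ := by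
    rw [fwdSet, Finset.card_filter, ← Finset.sum_add_distrib]
    have hone : ∀ j ∈ Finset.range (N - ℓ),
        ((if η ((ℓ + 1 + j : ℕ) : ZMod N) = false then 1 else 0)
          + (if η ((ℓ + 1 + j : ℕ) : ZMod N) then (1:ℕ) else 0)) = 1 := by
      intro j _; cases h : η ((ℓ + 1 + j : ℕ) : ZMod N) <;> simp [h]
    rw [Finset.sum_congr rfl hone]; simp
  have hLsplit : ∑ j ∈ Finset.range (N - ℓ), (if η ((ℓ + 1 + j : ℕ) : ZMod N) then 1 else 0)
      = (∑ j ∈ Finset.range (N - ℓ - 1), (if η ((ℓ + 1 + j : ℕ) : ZMod N) then 1 else 0))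
        + (if η 0 then 1 else 0) := by
    have hL : N - ℓ = (N - ℓ - 1) + 1 := by omega
    conv_lhs => rw [hL]
    rw [Finset.sum_range_succ]
    congr 1
    rw [show ℓ + 1 + (N - ℓ - 1) = N by omega, ZMod.natCast_self]
  have hpart := particles_eq (ℓ := ℓ) η (by omega)
  rw [hnum] at hpart
  have hicc : (∑ x ∈ Finset.Icc 1 ℓ, if η ((x : ℕ) : ZMod N) then 1 else 0) = pcount ℓ σ := by
    rw [pcount]; exact Finset.sum_congr rfl (fun x hx => by rw [hres x hx])
  rw [hicc] at hpart
  omega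

lemma fwd_mem_full (k ℓ : ℕ) (σ : ℕ → Bool)
    (h1 : N < 2 * k) (h2 : k ≤ N - 1) (h3 : 1 ≤ ℓ) (h4 : ℓ ≤ N - 1)
    (hp : pcount ℓ σ ≤ k) (hz : ℓ - pcount ℓ σ ≤ N - k) (η : Config N)
    (hη : (η ∈ ergodicSet N ∧ numParticles η = k) ∧
        ∀ x ∈ Finset.Icc 1 ℓ, η ((x : ℕ) : ZMod N) = σ x) :
    fwdSet N ℓ η ∈ Fset (N - ℓ) ((N - k) - (ℓ - pcount ℓ σ)) (σ ℓ) (σ 1) := by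
  obtain ⟨⟨herg', hnum⟩, hres⟩ := hη
  obtain ⟨herg, -⟩ := herg'
  have h2N : 2 ≤ N := by omega
  have hpl : pcount ℓ σ ≤ ℓ := pcount_le ℓ σ
  refine mem_Fset.2 ⟨⟨Finset.filter_subset _ _, ?_⟩, ?_, ?_, ?_⟩
  · rw [fwd_card σ η h3 h4 hres hnum]; omega
  · -- no two consecutive empty sites on the arc
    intro j hj hj1
    rw [fwdSet, Finset.mem_filter, Finset.mem_range] at hj hj1
    obtain ⟨hjL, hjf⟩ := hj
    obtain ⟨hj1L, hj1f⟩ := hj1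
    rcases herg ((ℓ + 1 + j : ℕ) : ZMod N) with h | h
    · rw [hjf] at h; simp at h
    · rw [show ((ℓ + 1 + j : ℕ) : ZMod N) + 1 = ((ℓ + 1 + (j + 1) : ℕ) : ZMod N) by
        push_cast; ring] at h
      rw [hj1f] at h; simp at h
  · -- σ ℓ = false forbids 0
    intro hsl h0mem
    rw [fwdSet, Finset.mem_filter, Finset.mem_range] at h0mem
    obtain ⟨-, hf⟩ := h0mem
    rcases herg ((ℓ : ℕ) : ZMod N) with h | h
    · rw [hres ℓ (Finset.mem_Icc.2 ⟨h3, le_refl ℓ⟩), hsl] at h; simp at h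
    · rw [show ((ℓ : ℕ) : ZMod N) + 1 = ((ℓ + 1 + 0 : ℕ) : ZMod N) by push_cast; ring] at h
      rw [hf] at h; simp at h
  · -- σ 1 = false forbids L-1
    intro hs1 hmem
    rw [fwdSet, Finset.mem_filter, Finset.mem_range] at hmem
    obtain ⟨-, hf⟩ := hmem
    rw [show ℓ + 1 + (N - ℓ - 1) = N by omega, ZMod.natCast_self] at hf
    rcases herg 0 with h | h
    · rw [hf] at h; simp at h
    · rw [show (0 : ZMod N) + 1 = ((1 : ℕ) : ZMod N) by push_cast; ring] at h
      rw [hres 1 (Finset.mem_Icc.2 ⟨le_refl 1, h3⟩), hs1] at h; simp at h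

lemma bwd_mem_full (k ℓ : ℕ) (σ : ℕ → Bool)
    (h1 : N < 2 * k) (h2 : k ≤ N - 1) (h3 : 1 ≤ ℓ) (h4 : ℓ ≤ N - 1)
    (hσ : ∀ x ∈ Finset.Ico 1 ℓ, σ x = true ∨ σ (x + 1) = true)
    (hp : pcount ℓ σ ≤ k) (hz : ℓ - pcount ℓ σ ≤ N - k) (S : Finset ℕ)
    (hS : S ∈ Fset (N - ℓ) ((N - k) - (ℓ - pcount ℓ σ)) (σ ℓ) (σ 1)) :
    (bwdCfg N ℓ σ S ∈ ergodicSet N ∧ numParticles (bwdCfg N ℓ σ S) = k) ∧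
      ∀ x ∈ Finset.Icc 1 ℓ, (bwdCfg N ℓ σ S) ((x : ℕ) : ZMod N) = σ x := by
  have h2N : 2 ≤ N := by omega
  have hpl : pcount ℓ σ ≤ ℓ := pcount_le ℓ σ
  obtain ⟨⟨hsub, hcard⟩, -, -, -⟩ := mem_Fset.1 hS
  have hnum : numParticles (bwdCfg N ℓ σ S) = k := by
    rw [bwd_particles σ S h3 h4 h2N hsub, hcard]; omega
  exact ⟨⟨⟨bwd_ergodic σ S h3 h4 hσ hS, by rw [hnum]; omega⟩, hnum⟩,
    bwd_restrict σ S h4 h2N⟩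

lemma bwd_fwd {ℓ : ℕ} (σ : ℕ → Bool) (η : Config N) (hℓ1 : 1 ≤ ℓ) (hℓ : ℓ ≤ N - 1)
    (hres : ∀ x ∈ Finset.Icc 1 ℓ, η ((x : ℕ) : ZMod N) = σ x) :
    bwdCfg N ℓ σ (fwdSet N ℓ η) = η := by
  have h2N : 2 ≤ N := by omega
  funext x
  have hvN : x.val < N := x.val_lt
  simp only [bwdCfg]
  by_cases hv0 : x.val = 0
  · rw [if_pos hv0]
    have hx0 : x = 0 := by
      have := cast_val x
      rw [hv0] at this
      simpa using this.symm
    have hmem : (N - ℓ - 1 ∈ fwdSet N ℓ η) ↔ (η 0 = false) := by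
      rw [fwdSet, Finset.mem_filter, Finset.mem_range,
        show ℓ + 1 + (N - ℓ - 1) = N by omega, ZMod.natCast_self]
      exact ⟨fun h => h.2, fun h => ⟨by omega, h⟩⟩
    rw [hx0]
    cases hη : η 0
    · simp [hmem, hη]
    · simp [hmem, hη]
  · rw [if_neg hv0]
    by_cases hvl : x.val ≤ ℓ
    · rw [if_pos hvl]
      have := hres x.val (Finset.mem_Icc.2 ⟨by omega, hvl⟩)
      rw [cast_val x] at this
      exact this.symm
    · rw [if_neg hvl]
      have hmem : (x.val - (ℓ + 1) ∈ fwdSet N ℓ η) ↔ (η x = false) := by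
        rw [fwdSet, Finset.mem_filter, Finset.mem_range,
          show ℓ + 1 + (x.val - (ℓ + 1)) = x.val by omega, cast_val x]
        exact ⟨fun h => h.2, fun h => ⟨by omega, h⟩⟩
      cases hη : η x
      · simp [hmem, hη]
      · simp [hmem, hη]

lemma fwd_bwd {ℓ : ℕ} (σ : ℕ → Bool) (S : Finset ℕ) (hℓ1 : 1 ≤ ℓ) (hℓ : ℓ ≤ N - 1)
    (hsub : S ⊆ Finset.range (N - ℓ)) :
    fwdSet N ℓ (bwdCfg N ℓ σ S) = S := by
  have h2N : 2 ≤ N := by omega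
  ext j
  rw [fwdSet, Finset.mem_filter, Finset.mem_range]
  constructor
  · rintro ⟨hjL, hjf⟩
    by_cases hjtop : j = N - ℓ - 1
    · rw [hjtop, show ℓ + 1 + (N - ℓ - 1) = N by omega, ZMod.natCast_self, bwd_zero] at hjf
      simp only [Bool.not_eq_false'] at hjf
      have : N - ℓ - 1 ∈ S := by simpa using hjf
      exact hjtop ▸ this
    · rw [bwd_at σ S (ℓ + 1 + j) (by omega), if_neg (show ¬(ℓ + 1 + j = 0) by omega),
        if_neg (show ¬(ℓ + 1 + j ≤ ℓ) by omega), show ℓ + 1 + j - (ℓ + 1) = j by omega] at hjf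
      simpa using hjf
  · intro hjS
    have hjL : j < N - ℓ := Finset.mem_range.1 (hsub hjS)
    refine ⟨hjL, ?_⟩
    by_cases hjtop : j = N - ℓ - 1
    · rw [hjtop, show ℓ + 1 + (N - ℓ - 1) = N by omega, ZMod.natCast_self, bwd_zero]
      have : N - ℓ - 1 ∈ S := hjtop ▸ hjS
      simp [this]
    · rw [bwd_at σ S (ℓ + 1 + j) (by omega), if_neg (show ¬(ℓ + 1 + j = 0) by omega),
        if_neg (show ¬(ℓ + 1 + j ≤ ℓ) by omega), show ℓ + 1 + j - (ℓ + 1) = j by omega]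
      simp [hjS]

end Fwd

/-- **Counting ergodic configurations with a prescribed local restriction.**  For
`N/2 < k ≤ N−1`, `m = N−k`, `1 ≤ ℓ ≤ N−1`, and a local ergodic configuration `σ` on `Λ_ℓ`
with `p ≤ k` particles and `z = ℓ − p ≤ m` empty sites, the number of configurations of
`Ω_N^k` restricting to `σ` on `Λ_ℓ` is `binom(k−p+σ(1)+σ(ℓ)−1, m−z)`. -/
theorem card_ergodic_with_restriction (N k ℓ : ℕ) [NeZero N]
    (h1 : N < 2 * k) (h2 : k ≤ N - 1) (h3 : 1 ≤ ℓ) (h4 : ℓ ≤ N - 1)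
    (σ : ℕ → Bool)
    (hσ : ∀ x ∈ Finset.Ico 1 ℓ, σ x = true ∨ σ (x + 1) = true)
    (hp : pcount ℓ σ ≤ k) (hz : ℓ - pcount ℓ σ ≤ N - k) :
    Nat.card {η : Config N // (η ∈ ergodicSet N ∧ numParticles η = k) ∧
        ∀ x ∈ Finset.Icc 1 ℓ, η ((x : ℕ) : ZMod N) = σ x}
      = Nat.choose
          (k - pcount ℓ σ + (if σ 1 then 1 else 0) + (if σ ℓ then 1 else 0) - 1)
          (N - k - (ℓ - pcount ℓ σ)) := by
  have hN1 : 1 ≤ N := Nat.one_le_iff_ne_zero.2 (NeZero.ne N)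
  have h2N : 2 ≤ N := by omega
  have hpl : pcount ℓ σ ≤ ℓ := pcount_le ℓ σ
  have hL1 : 1 ≤ N - ℓ := by omega
  have hbL : (N - k) - (ℓ - pcount ℓ σ) ≤ N - ℓ := by omega
  have hcardEq : Nat.card {η : Config N // (η ∈ ergodicSet N ∧ numParticles η = k) ∧
        ∀ x ∈ Finset.Icc 1 ℓ, η ((x : ℕ) : ZMod N) = σ x}
      = (Fset (N - ℓ) ((N - k) - (ℓ - pcount ℓ σ)) (σ ℓ) (σ 1)).card := by
    rw [← Nat.card_eq_finsetCard]
    refine Nat.card_congr ?_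
    exact
      { toFun := fun η => ⟨fwdSet N ℓ η.1, fwd_mem_full k ℓ σ h1 h2 h3 h4 hp hz η.1 η.2⟩
        invFun := fun S => ⟨bwdCfg N ℓ σ S.1, bwd_mem_full k ℓ σ h1 h2 h3 h4 hσ hp hz S.1 S.2⟩
        left_inv := fun η => Subtype.ext (bwd_fwd σ η.1 h3 h4 η.2.2)
        right_inv := fun S => Subtype.ext
          (fwd_bwd σ S.1 h3 h4 (mem_Fset.1 S.2).1.1) }
  rw [hcardEq]
  clear hcardEq
  rw [Fset_card (N - ℓ) ((N - k) - (ℓ - pcount ℓ σ)) hL1 hbL (σ ℓ) (σ 1)]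
  have e : (N - ℓ - ((N - k) - (ℓ - pcount ℓ σ))) + (if σ ℓ then 1 else 0)
        + (if σ 1 then 1 else 0) - 1
      = k - pcount ℓ σ + (if σ 1 then 1 else 0) + (if σ ℓ then 1 else 0) - 1 := by
    rcases Bool.eq_false_or_eq_true (σ 1) with hs1 | hs1 <;>
      rcases Bool.eq_false_or_eq_true (σ ℓ) with hsl | hsl <;>
        simp only [hs1, hsl, if_true, if_false, Bool.false_eq_true, ite_true, ite_false] <;> omega
  rw [e]

end FEP
end
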